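/- arXiv:1110.4137 — 7 statements merged into one kernel-verified Lean document; each statement's English description precedes it below -/
import Mathlib

section
/- Let n, m ≥ 1 and let Γ = (w; a_1,…,a_{n−1}) be a depth-ordering on n points with a_p ≤ m−1 for every p. Then the Fox–Neuwirth cell Conf_Γ(m), with its subspace topology, is homeomorphic to the Euclidean space ℝ^d of dimension d = mn − (a_1+⋯+a_{n−1}). -/
/-!
Listing the points in the order `w`, a configuration in the cell becomes a tuple `y₀, …, y_{n-1}`
in which `y_{p+1}` agrees with `y_p` in its first `a_p` coordinates and exceeds it in coordinate
`a_p`; such a tuple increases lexicographically, so injectivity is automatic. The tuple is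
recorded, homeomorphically, by all coordinates of `y₀` together with, for each `p`, the
coordinates of `y_{p+1}` of index at least `a_p`, where the positive gap in coordinate `a_p` is
replaced by its logarithm. That leaves `m + ∑ (m - a_p)` free real coordinates.
-/

namespace FoxNeuwirth

/-- The space of configurations of `n` distinct labeled points in `ℝ^m`: injective maps
`Fin n → ℝ^m`, topologized as a subspace of `(ℝ^m)^n`. -/
abbrev Conf (n m : ℕ) : Type := {x : Fin n → (Fin m → ℝ) // Function.Injective x}

/-- The Fox-Neuwirth cell of the depth-ordering `(w; a)`: the set of configurations `x` such
that for each `p`, the points `x (w p)` and `x (w (p+1))` agree in their first `a p`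
coordinates and the `(a p + 1)`-st coordinate of `x (w p)` is strictly less than that of
`x (w (p+1))`. -/
def cell (n m : ℕ) (w : Fin n → Fin n) (a : Fin (n - 1) → ℕ) : Set (Conf n m) :=
  {x | ∀ p : Fin (n - 1),
    (∀ q : Fin m, (q : ℕ) < a p →
        x.1 (w ⟨p.1, lt_of_lt_of_le p.2 (Nat.sub_le n 1)⟩) q
          = x.1 (w ⟨p.1 + 1, by have := p.2; omega⟩) q) ∧
    (∀ q : Fin m, (q : ℕ) = a p →
        x.1 (w ⟨p.1, lt_of_lt_of_le p.2 (Nat.sub_le n 1)⟩) q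
          < x.1 (w ⟨p.1 + 1, by have := p.2; omega⟩) q)}

open Real

section RelativeCoordinates

variable {m : ℕ} (d : ℕ)

def LtAtDepth (u v : Fin m → ℝ) : Prop :=
  (∀ q : Fin m, (q : ℕ) < d → u q = v q) ∧ ∀ q : Fin m, (q : ℕ) = d → u q < v q

variable {d}

theorem LtAtDepth.toLex_lt {u v : Fin m → ℝ} (h : LtAtDepth d u v) (hd : d < m) :
    toLex u < toLex v :=
  ⟨⟨d, hd⟩, fun q hq => h.1 q hq, h.2 _ rfl⟩

variable (d)

noncomputable def relCoords (u v : Fin m → ℝ) (q : {q : Fin m // d ≤ (q : ℕ)}) : ℝ :=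
  if (q : ℕ) = d then log (v q - u q) else v q

noncomputable def ofRelCoords (u : Fin m → ℝ) (f : {q : Fin m // d ≤ (q : ℕ)} → ℝ)
    (q : Fin m) : ℝ :=
  if h : (q : ℕ) < d then u q
  else if (q : ℕ) = d then u q + exp (f ⟨q, not_lt.1 h⟩) else f ⟨q, not_lt.1 h⟩

variable {d}

theorem ltAtDepth_ofRelCoords (u : Fin m → ℝ) (f : {q : Fin m // d ≤ (q : ℕ)} → ℝ) :
    LtAtDepth d u (ofRelCoords d u f) := by
  refine ⟨fun q hq => by simp [ofRelCoords, hq], fun q hq => ?_⟩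
  simpa [ofRelCoords, hq] using exp_pos _

theorem relCoords_ofRelCoords (u : Fin m → ℝ) (f : {q : Fin m // d ≤ (q : ℕ)} → ℝ) :
    relCoords d u (ofRelCoords d u f) = f := by
  funext ⟨q, hq⟩
  by_cases h : (q : ℕ) = d <;> simp [relCoords, ofRelCoords, h, not_lt.2 hq]

theorem ofRelCoords_relCoords {u v : Fin m → ℝ} (h : LtAtDepth d u v) :
    ofRelCoords d u (relCoords d u v) = v := by
  funext q
  rcases lt_trichotomy (q : ℕ) d with hlt | heq | hgt
  · simp [ofRelCoords, hlt, h.1 q hlt]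
  · simp [ofRelCoords, relCoords, heq, exp_log (sub_pos.2 (h.2 q heq))]
  · simp [ofRelCoords, relCoords, hgt.ne', not_lt.2 hgt.le]

theorem continuous_ofRelCoords :
    Continuous fun uf : (Fin m → ℝ) × ({q : Fin m // d ≤ (q : ℕ)} → ℝ) =>
      ofRelCoords d uf.1 uf.2 := by
  refine continuous_pi fun q => ?_
  unfold ofRelCoords
  split_ifs <;> fun_prop

theorem continuousOn_relCoords :
    ContinuousOn (fun uv : (Fin m → ℝ) × (Fin m → ℝ) => relCoords d uv.1 uv.2)
      {uv | LtAtDepth d uv.1 uv.2} := by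
  refine continuousOn_pi.2 fun q => ?_
  unfold relCoords
  split_ifs with hq
  · exact ContinuousOn.log (by fun_prop) fun uv huv => (sub_pos.2 (huv.2 q hq)).ne'
  · fun_prop

theorem card_fin_subtype_le :
    Fintype.card {q : Fin m // d ≤ (q : ℕ)} = m - d := by
  have h := Fintype.card_subtype_compl fun q : Fin m => (q : ℕ) < d
  simp only [not_lt, Fintype.card_fin, Fin.card_filter_val_lt, Fintype.card_subtype] at h
  rw [Fintype.card_subtype]
  convert h using 1
  omega

end RelativeCoordinates

section OrderedCell

variable {k m : ℕ} (a : Fin k → ℕ)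

def orderedCell : Set (Fin (k + 1) → Fin m → ℝ) :=
  {y | ∀ p : Fin k, LtAtDepth (a p) (y p.castSucc) (y p.succ)}

theorem mem_cell_iff {w : Fin (k + 1) → Fin (k + 1)} {x : Conf (k + 1) m} :
    x ∈ cell (k + 1) m w a ↔ x.1 ∘ w ∈ orderedCell a :=
  Iff.rfl

variable {a}

theorem injective_of_mem_orderedCell (ha : ∀ p, a p < m) {y : Fin (k + 1) → Fin m → ℝ}
    (hy : y ∈ orderedCell a) : Function.Injective y := by
  have : StrictMono fun i => toLex (y i) :=
    Fin.strictMono_iff_lt_succ.2 fun p => (hy p).toLex_lt (ha p)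
  exact Function.Injective.of_comp (f := toLex) this.injective

def cellHomeomorphOrderedCell (σ : Fin (k + 1) ≃ Fin (k + 1)) (ha : ∀ p, a p < m) :
    cell (k + 1) m σ a ≃ₜ orderedCell (m := m) a where
  toFun x := ⟨x.1.1 ∘ σ, x.2⟩
  invFun y := ⟨⟨y.1 ∘ σ.symm, (injective_of_mem_orderedCell ha y.2).comp σ.symm.injective⟩,
    by rw [mem_cell_iff, Function.comp_assoc, σ.symm_comp_self]; exact y.2⟩
  left_inv x := by ext; simp
  right_inv y := by ext; simp
  continuous_toFun := by
    refine .subtype_mk (continuous_pi fun i => ?_) _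
    exact (continuous_apply (σ i)).comp (continuous_subtype_val.comp continuous_subtype_val)
  continuous_invFun := by
    refine .subtype_mk (.subtype_mk (continuous_pi fun i => ?_) _) _
    exact (continuous_apply (σ.symm i)).comp continuous_subtype_val

variable (a)

variable (m) in
abbrev FreeCoord : Type := Fin m ⊕ Σ p : Fin k, {q : Fin m // a p ≤ (q : ℕ)}

noncomputable def toFreeCoords (y : Fin (k + 1) → Fin m → ℝ) : FreeCoord m a → ℝ :=
  Sum.elim (y 0) fun pq => relCoords (a pq.1) (y pq.1.castSucc) (y pq.1.succ) pq.2

noncomputable def ofFreeCoords (f : FreeCoord m a → ℝ) : Fin (k + 1) → Fin m → ℝ :=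
  Fin.induction (f ∘ Sum.inl) fun p u => ofRelCoords (a p) u fun q => f (Sum.inr ⟨p, q⟩)

variable (f : FreeCoord m a → ℝ)

theorem ofFreeCoords_zero : ofFreeCoords a f 0 = f ∘ Sum.inl := rfl

theorem ofFreeCoords_succ (p : Fin k) :
    ofFreeCoords a f p.succ =
      ofRelCoords (a p) (ofFreeCoords a f p.castSucc) fun q => f (Sum.inr ⟨p, q⟩) :=
  Fin.induction_succ ..

theorem ofFreeCoords_mem_orderedCell : ofFreeCoords a f ∈ orderedCell a := fun p => by
  rw [ofFreeCoords_succ]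
  exact ltAtDepth_ofRelCoords _ _

theorem toFreeCoords_ofFreeCoords : toFreeCoords a (ofFreeCoords a f) = f := by
  funext c
  rcases c with q | ⟨p, q⟩
  · rfl
  · simp only [toFreeCoords, Sum.elim_inr, ofFreeCoords_succ, relCoords_ofRelCoords]

theorem ofFreeCoords_toFreeCoords {y : Fin (k + 1) → Fin m → ℝ} (hy : y ∈ orderedCell a) :
    ofFreeCoords a (toFreeCoords a y) = y := by
  funext i
  induction i using Fin.induction with
  | zero => rfl
  | succ p ih =>
    rw [ofFreeCoords_succ, ih]
    exact ofRelCoords_relCoords (hy p)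

theorem continuous_ofFreeCoords : Continuous (ofFreeCoords (m := m) a) := by
  refine continuous_pi fun i => ?_
  induction i using Fin.induction with
  | zero =>
    simp only [ofFreeCoords_zero]
    fun_prop
  | succ p ih =>
    simp only [ofFreeCoords_succ]
    exact (continuous_ofRelCoords (d := a p)).comp
      (ih.prodMk (continuous_pi fun q => continuous_apply (Sum.inr ⟨p, q⟩)))

theorem continuousOn_toFreeCoords : ContinuousOn (toFreeCoords (m := m) a) (orderedCell a) := by
  refine continuousOn_pi.2 fun c => ?_
  rcases c with q | ⟨p, q⟩
  · exact (continuous_apply_apply 0 q).continuousOn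
  · refine ((continuous_apply q).comp_continuousOn continuousOn_relCoords).comp
      ((continuous_apply _).prodMk (continuous_apply _)).continuousOn
      fun y (hy : y ∈ orderedCell a) => hy p

noncomputable def orderedCellHomeomorph : orderedCell (m := m) a ≃ₜ (FreeCoord m a → ℝ) where
  toFun y := toFreeCoords a y
  invFun f := ⟨ofFreeCoords a f, ofFreeCoords_mem_orderedCell a f⟩
  left_inv y := Subtype.ext (ofFreeCoords_toFreeCoords a y.2)
  right_inv := toFreeCoords_ofFreeCoords a
  continuous_toFun := (continuousOn_toFreeCoords a).domRestrict
  continuous_invFun := (continuous_ofFreeCoords a).subtype_mk _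

theorem card_freeCoord (ha : ∀ p, a p ≤ m) :
    Fintype.card (FreeCoord m a) = m * (k + 1) - ∑ p, a p := by
  have hsum : ∑ p, (m - a p) = m * k - ∑ p, a p := by
    rw [Finset.sum_tsub_distrib _ fun p _ => ha p]
    simp [mul_comm]
  have hle : ∑ p, a p ≤ m * k := by
    simpa [mul_comm] using Finset.sum_le_sum fun p (_ : p ∈ Finset.univ) => ha p
  simp only [Fintype.card_sum, Fintype.card_sigma, card_fin_subtype_le, Fintype.card_fin, hsum]
  rw [mul_add_one]
  omega

end OrderedCell

/-- For `n, m ≥ 1` and a depth-ordering `(w; a)` with every `aₚ ≤ m - 1`,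
the Fox-Neuwirth cell is homeomorphic (in its subspace topology) to the Euclidean space of
dimension `m·n - (a₁ + ⋯ + a_{n-1})`. -/
theorem cell_homeomorph_euclidean (n m : ℕ) (hn : 1 ≤ n) (hm : 1 ≤ m)
    (w : Fin n → Fin n) (hw : Function.Bijective w)
    (a : Fin (n - 1) → ℕ) (ha : ∀ p, a p ≤ m - 1) :
    Nonempty (cell n m w a ≃ₜ (Fin (m * n - ∑ p, a p) → ℝ)) := by
  obtain ⟨k, rfl⟩ : ∃ k, n = k + 1 := ⟨n - 1, by omega⟩
  have ha' : ∀ p : Fin k, a p < m := fun p => by have := ha p; omega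
  exact ⟨(cellHomeomorphOrderedCell (Equiv.ofBijective w hw) ha').trans <|
    (orderedCellHomeomorph (k := k) a).trans <| Homeomorph.piCongrLeft (Y := fun _ => ℝ)
      (Fintype.equivFinOfCardEq (card_freeCoord (k := k) a fun p => (ha' p).le))⟩

end FoxNeuwirth
end

section
/- Let n, m ≥ 1 and let Γ = (w; a_1,…,a_{n−1}) be a depth-ordering with a_p ≤ m−1 for all p. Every point of the closure of Conf_Γ(m) in Conf(n,m) that does not lie in Conf_Γ(m) itself lies in some Fox–Neuwirth cell Conf_{Γ'}(m) where Γ' = (w'; a'_1,…,a'_{n−1}) satisfies a'_1+⋯+a'_{n−1} > a_1+⋯+a_{n−1}; that is, the frontier of each cell is contained in the union of the cells of strictly smaller dimension. -/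
namespace FoxNeuwirth

/-!
A point `x` of the closure satisfies the conditions of the cell with `<` weakened to `≤`; as `x`
is not in the cell, one of them is an equality, so the depths to which `w`-consecutive points of
`x` agree dominate `a`, with one strict inequality. Sorting the points of `x` lexicographically
gives a cell containing `x` whose labels are the depths of agreement of lexicographically
consecutive points, and the sorted order maximizes the total depth: for every level `t`, a walk
through the points leaves a class of agreement to depth `t` at least (number of classes) - 1
times, and the sorted walk exactly that often.
-/

open Finset

section AgreeDepth

variable {α : Type*} {m t : ℕ}

open Classical

noncomputable def agreeDepth (u v : Fin m → α) : ℕ :=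
  Nat.findGreatest (fun t => Set.EqOn u v {q | (q : ℕ) < t}) m

theorem agreeDepth_le (u v : Fin m → α) : agreeDepth u v ≤ m :=
  Nat.findGreatest_le m

theorem le_agreeDepth_iff {u v : Fin m → α} (ht : t ≤ m) :
    t ≤ agreeDepth u v ↔ Set.EqOn u v {q | (q : ℕ) < t} := by
  refine ⟨fun h q hq => ?_, fun h => Nat.le_findGreatest ht h⟩
  have hdepth : Set.EqOn u v {q | (q : ℕ) < agreeDepth u v} :=
    Nat.findGreatest_spec (P := fun t => Set.EqOn u v {q | (q : ℕ) < t}) (Nat.zero_le m)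
      (fun q hq => absurd hq (Nat.not_lt_zero _))
  exact hdepth (lt_of_lt_of_le hq h)

theorem eqOn_agreeDepth (u v : Fin m → α) :
    Set.EqOn u v {q | (q : ℕ) < agreeDepth u v} :=
  (le_agreeDepth_iff (agreeDepth_le u v)).1 le_rfl

theorem agreeDepth_eq_of_forall_lt_of_ne {u v : Fin m → α} (i : Fin m) (hlt : ∀ j < i, u j = v j)
    (hi : u i ≠ v i) : agreeDepth u v = i := by
  refine le_antisymm (not_lt.1 fun h => hi (eqOn_agreeDepth u v h)) ?_
  exact (le_agreeDepth_iff i.2.le).2 fun j hj => hlt j hj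

theorem agreeDepth_eq_card (u v : Fin m → α) :
    agreeDepth u v = #{t ∈ range m | Set.EqOn u v {q | (q : ℕ) < t + 1}} := by
  have hle := agreeDepth_le u v
  suffices {t ∈ range m | Set.EqOn u v {q | (q : ℕ) < t + 1}} = range (agreeDepth u v) by
    rw [this, card_range]
  ext t
  simp only [mem_filter, mem_range]
  constructor
  · rintro ⟨htm, hagree⟩
    exact (le_agreeDepth_iff htm).2 hagree
  · intro ht
    exact ⟨by omega, (le_agreeDepth_iff (by omega)).1 ht⟩

end AgreeDepth

section Lex

variable {α : Type*} {m : ℕ}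

theorem lt_at_agreeDepth [LinearOrder α] {u v : Fin m → α} (h : toLex u < toLex v) :
    ∀ q : Fin m, (q : ℕ) = agreeDepth u v → u q < v q := by
  obtain ⟨i, hlt, hi⟩ := h
  intro q hq
  rwa [Fin.ext (hq.trans (agreeDepth_eq_of_forall_lt_of_ne i hlt hi.ne))]

variable [Zero α]

def truncate (t : ℕ) (u : Fin m → α) : Fin m → α := fun q => if (q : ℕ) < t then u q else 0

theorem truncate_eq_truncate_iff {t : ℕ} {u v : Fin m → α} :
    truncate t u = truncate t v ↔ Set.EqOn u v {q | (q : ℕ) < t} := by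
  refine ⟨fun h q (hq : (q : ℕ) < t) => by simpa [truncate, hq] using congrFun h q, fun h => ?_⟩
  funext q
  by_cases hq : (q : ℕ) < t
  · simp only [truncate, hq, if_true, h hq]
  · simp only [truncate, hq, if_false]

theorem toLex_truncate_le [LinearOrder α] {t : ℕ} {u v : Fin m → α} (h : toLex u ≤ toLex v) :
    toLex (truncate t u) ≤ toLex (truncate t v) := by
  obtain ⟨i, hlt, hi⟩ | heq := h.lt_or_eq
  · by_cases hit : (i : ℕ) < t
    · refine le_of_lt ⟨i, fun j hj => ?_, by simpa [truncate, hit] using hi⟩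
      change truncate t u j = truncate t v j
      rw [truncate, truncate, show u j = v j from hlt j hj]
    · refine le_of_eq (congrArg toLex (truncate_eq_truncate_iff.2 fun q (hq : (q : ℕ) < t) => ?_))
      exact hlt q (Fin.lt_def.2 (by omega))
  · rw [toLex_inj.1 heq]

end Lex

section Walk

variable {β : Type*} {n : ℕ}

def consecFst (n : ℕ) (p : Fin (n - 1)) : Fin n := ⟨p, by omega⟩

def consecSnd (n : ℕ) (p : Fin (n - 1)) : Fin n := ⟨p + 1, by omega⟩

theorem consecFst_lt_consecSnd (p : Fin (n - 1)) : consecFst n p < consecSnd n p :=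
  Fin.lt_def.2 (Nat.lt_succ_self _)

theorem consecSnd_le_consecFst {p p' : Fin (n - 1)} (h : p < p') :
    consecSnd n p ≤ consecFst n p' :=
  Fin.le_def.2 h

variable [DecidableEq β]

theorem card_image_le_card_steps_add_one (g : Fin n → β) :
    #(univ.image g) ≤ #{p : Fin (n - 1) | g (consecFst n p) ≠ g (consecSnd n p)} + 1 := by
  rcases Nat.eq_zero_or_pos n with rfl | hn
  · simp
  set steps : Finset (Fin (n - 1)) := {p | g (consecFst n p) ≠ g (consecSnd n p)}
  have hvisit : ∀ k (hk : k < n),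
      g ⟨k, hk⟩ ∈ insert (g ⟨0, hn⟩) (steps.image (g ∘ consecSnd n)) := by
    intro k
    induction k with
    | zero => exact fun _ => mem_insert_self _ _
    | succ k ih =>
      intro hk
      by_cases hstay : g ⟨k, by omega⟩ = g ⟨k + 1, hk⟩
      · exact hstay ▸ ih (by omega)
      · exact mem_insert_of_mem (mem_image.2 ⟨⟨k, by omega⟩, mem_filter.2 ⟨mem_univ _, hstay⟩, rfl⟩)
  calc #(univ.image g)
      ≤ #(insert (g ⟨0, hn⟩) (steps.image (g ∘ consecSnd n))) :=
        card_le_card fun b hb => by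
          obtain ⟨i, -, rfl⟩ := mem_image.1 hb
          exact hvisit i i.2
    _ ≤ #steps + 1 := (card_insert_le _ _).trans (Nat.add_le_add_right card_image_le 1)

theorem card_steps_add_one_le_card_image [PartialOrder β] (hn : 0 < n) {g : Fin n → β}
    (hg : Monotone g) :
    #{p : Fin (n - 1) | g (consecFst n p) ≠ g (consecSnd n p)} + 1 ≤ #(univ.image g) := by
  set steps : Finset (Fin (n - 1)) := {p | g (consecFst n p) ≠ g (consecSnd n p)}
  have hstep : ∀ p ∈ steps, g (consecFst n p) < g (consecSnd n p) := fun p hp =>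
    (hg (consecFst_lt_consecSnd p).le).lt_of_ne (mem_filter.1 hp).2
  have hmaps : ∀ p ∈ steps, g (consecSnd n p) ∈ (univ.image g).erase (g ⟨0, hn⟩) := fun p hp =>
    mem_erase.2 ⟨(lt_of_le_of_lt (hg (Fin.le_def.2 (Nat.zero_le _))) (hstep p hp)).ne',
      mem_image_of_mem g (mem_univ _)⟩
  have hinj : Set.InjOn (g ∘ consecSnd n) steps := by
    intro p hp p' hp' heq
    by_contra hne
    rcases lt_or_gt_of_ne hne with hlt | hlt
    · exact (lt_of_le_of_lt (hg (consecSnd_le_consecFst hlt)) (hstep p' hp')).ne heq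
    · exact (lt_of_le_of_lt (hg (consecSnd_le_consecFst hlt)) (hstep p hp)).ne heq.symm
  have := card_le_card_of_injOn _ hmaps hinj
  rw [card_erase_of_mem (mem_image_of_mem g (mem_univ _))] at this
  have := card_pos.2 ⟨_, mem_image_of_mem g (mem_univ ⟨0, hn⟩)⟩
  omega

theorem card_stays_le_of_monotone [PartialOrder β] (g : Fin n → β) {w σ : Fin n → Fin n}
    (hw : Function.Surjective w) (hσ : Function.Surjective σ) (hg : Monotone (g ∘ σ)) :
    #{p : Fin (n - 1) | g (w (consecFst n p)) = g (w (consecSnd n p))} ≤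
      #{p : Fin (n - 1) | g (σ (consecFst n p)) = g (σ (consecSnd n p))} := by
  rcases Nat.eq_zero_or_pos n with rfl | hn
  · simp
  have himage : ∀ {v : Fin n → Fin n}, Function.Surjective v →
      univ.image (g ∘ v) = univ.image g := fun hv => by
    rw [← image_image, image_univ_of_surjective hv]
  have hw' := card_image_le_card_steps_add_one (g ∘ w)
  have hσ' := card_steps_add_one_le_card_image hn hg
  rw [himage hw] at hw'
  rw [himage hσ] at hσ'
  have := card_filter_add_card_filter_not (s := univ)
    fun p : Fin (n - 1) => g (w (consecFst n p)) = g (w (consecSnd n p))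
  have := card_filter_add_card_filter_not (s := univ)
    fun p : Fin (n - 1) => g (σ (consecFst n p)) = g (σ (consecSnd n p))
  simp only [Function.comp_apply, ne_eq] at *
  omega

end Walk

theorem sum_agreeDepth_le_of_monotone {α : Type*} [LinearOrder α] [Zero α] {n m : ℕ}
    (x : Fin n → Fin m → α) {w σ : Fin n → Fin n} (hw : Function.Surjective w)
    (hσ : Function.Surjective σ) (hx : Monotone (toLex ∘ x ∘ σ)) :
    ∑ p, agreeDepth (x (w (consecFst n p))) (x (w (consecSnd n p))) ≤
      ∑ p, agreeDepth (x (σ (consecFst n p))) (x (σ (consecSnd n p))) := by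
  classical
  simp only [agreeDepth_eq_card, card_filter]
  rw [sum_comm, sum_comm (s := univ)]
  refine sum_le_sum fun t _ => ?_
  simp only [← card_filter, ← truncate_eq_truncate_iff (t := t + 1)]
  exact card_stays_le_of_monotone (fun i => toLex (truncate (t + 1) (x i))) hw hσ
    fun i j hij => toLex_truncate_le (hx hij)

theorem closure_cell_subset (n m : ℕ) (w : Fin n → Fin n) (a : Fin (n - 1) → ℕ) :
    closure (cell n m w a) ⊆ {x | ∀ p,
      (∀ q : Fin m, (q : ℕ) < a p → x.1 (w (consecFst n p)) q = x.1 (w (consecSnd n p)) q) ∧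
      (∀ q : Fin m, (q : ℕ) = a p → x.1 (w (consecFst n p)) q ≤ x.1 (w (consecSnd n p)) q)} := by
  have hc : ∀ i q, Continuous fun y : Conf n m => y.1 i q := fun i q =>
    (continuous_apply q).comp ((continuous_apply i).comp continuous_subtype_val)
  intro x hx p
  exact ⟨fun q hq => closure_minimal (fun y hy => (hy p).1 q hq)
      (isClosed_eq (hc _ q) (hc _ q)) hx,
    fun q hq => closure_minimal (fun y hy => ((hy p).2 q hq).le)
      (isClosed_le (hc _ q) (hc _ q)) hx⟩

theorem mem_cell_agreeDepth {n m : ℕ} (x : Conf n m) {σ : Fin n → Fin n}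
    (hσ : StrictMono (toLex ∘ x.1 ∘ σ)) :
    x ∈ cell n m σ fun p => agreeDepth (x.1 (σ (consecFst n p))) (x.1 (σ (consecSnd n p))) :=
  fun p => ⟨fun _ hq => eqOn_agreeDepth _ _ hq, lt_at_agreeDepth (hσ (consecFst_lt_consecSnd p))⟩

theorem cell_frontier_in_smaller_cells_general (n m : ℕ)
    (w : Fin n → Fin n) (hw : Function.Bijective w)
    (a : Fin (n - 1) → ℕ) (ha : ∀ p, a p ≤ m - 1)
    (x : Conf n m) (hx : x ∈ closure (cell n m w a)) (hx' : x ∉ cell n m w a) :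
    ∃ (w' : Fin n → Fin n) (a' : Fin (n - 1) → ℕ),
      Function.Bijective w' ∧ (∑ p, a p) < (∑ p, a' p) ∧ x ∈ cell n m w' a' := by
  have hweak := closure_cell_subset n m w a hx
  obtain ⟨p₀, q₀, hq₀, hq₀_eq⟩ : ∃ (p : Fin (n - 1)) (q : Fin m), (q : ℕ) = a p ∧
      x.1 (w (consecFst n p)) q = x.1 (w (consecSnd n p)) q := by
    by_contra! h
    exact hx' fun p => ⟨(hweak p).1, fun q hq => ((hweak p).2 q hq).lt_of_ne (h p q hq)⟩
  have hdepth_ge : ∀ p, a p ≤ agreeDepth (x.1 (w (consecFst n p))) (x.1 (w (consecSnd n p))) :=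
    fun p => (le_agreeDepth_iff (by have := ha p; omega)).2 fun q hq => (hweak p).1 q hq
  have hdepth_gt : a p₀ < agreeDepth (x.1 (w (consecFst n p₀))) (x.1 (w (consecSnd n p₀))) := by
    refine (le_agreeDepth_iff (by omega)).2 fun q hq => ?_
    rcases (Nat.lt_succ_iff_lt_or_eq.1 hq) with hlt | heq
    · exact (hweak p₀).1 q hlt
    · rwa [Fin.ext (heq.trans hq₀.symm)]
  set σ := Tuple.sort (toLex ∘ x.1)
  have hσ : StrictMono (toLex ∘ x.1 ∘ σ) :=
    (Tuple.monotone_sort _).strictMono_of_injective (x.2.comp σ.injective)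
  refine ⟨σ, _, σ.bijective, ?_, mem_cell_agreeDepth x hσ⟩
  calc ∑ p, a p
      < ∑ p, agreeDepth (x.1 (w (consecFst n p))) (x.1 (w (consecSnd n p))) :=
        sum_lt_sum (fun p _ => hdepth_ge p) ⟨p₀, mem_univ _, hdepth_gt⟩
    _ ≤ _ := sum_agreeDepth_le_of_monotone x.1 hw.surjective σ.surjective hσ.monotone

/-- For `n, m ≥ 1` and a depth-ordering `(w; a)` with all `aₚ ≤ m - 1`,
every point of the closure of the cell `Conf_Γ(m)` in `Conf(n,m)` not lying in the cell
itself lies in some Fox-Neuwirth cell whose labels have strictly larger sum; that is, the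
frontier of each cell is contained in the union of the cells of strictly smaller dimension. -/
theorem cell_frontier_in_smaller_cells (n m : ℕ) (hn : 1 ≤ n) (hm : 1 ≤ m)
    (w : Fin n → Fin n) (hw : Function.Bijective w)
    (a : Fin (n - 1) → ℕ) (ha : ∀ p, a p ≤ m - 1)
    (x : Conf n m) (hx : x ∈ closure (cell n m w a)) (hx' : x ∉ cell n m w a) :
    ∃ (w' : Fin n → Fin n) (a' : Fin (n - 1) → ℕ),
      Function.Bijective w' ∧ (∑ p, a p) < (∑ p, a' p) ∧ x ∈ cell n m w' a' :=
  cell_frontier_in_smaller_cells_general n m w hw a ha x hx hx'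

end FoxNeuwirth
end

section
/- Let n, m ≥ 1, let Γ = (w; a_1,…,a_{n−1}) be a depth-ordering with a_p ≤ m−1 for all p, and fix 1 ≤ q ≤ n−1 with a_q + 1 ≤ m−1. Let Γ' = (w; a_1,…,a_{q−1}, a_q+1, a_{q+1},…,a_{n−1}) be the depth-ordering obtained by increasing the q-th inequality label by one while keeping the same ordering of the points. Then Conf_{Γ'}(m) is contained in the closure of Conf_Γ(m) in Conf(n,m). -/
namespace FoxNeuwirth

/-!
Push every point that comes after position `q` in the ordering `w` up by `ε > 0` in coordinate
`a q`. For a configuration of the finer cell this turns the equality in coordinate `a q` between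
positions `q` and `q + 1` into a strict inequality and changes nothing else, so the pushed
configuration lies in the coarser cell; it is injective because consecutive points increase
lexicographically, and it tends to the original configuration as `ε → 0`.
-/

open Filter Topology

theorem strictMono_fin_of_lt_add_one {α : Type*} [Preorder α] {n : ℕ} {f : Fin n → α}
    (h : ∀ p : Fin (n - 1),
      f ⟨p.1, lt_of_lt_of_le p.2 (Nat.sub_le n 1)⟩ < f ⟨p.1 + 1, by have := p.2; omega⟩) :
    StrictMono f := by
  cases n with
  | zero => exact fun i => i.elim0
  | succ k => exact Fin.strictMono_iff_lt_succ.2 h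

/-- The condition defining `cell n m w a`, for maps that are not yet known to be injective. -/
def InCell {n m : ℕ} (w : Fin n → Fin n) (a : Fin (n - 1) → ℕ) (y : Fin n → Fin m → ℝ) :
    Prop :=
  ∀ p : Fin (n - 1),
    (∀ q : Fin m, (q : ℕ) < a p →
        y (w ⟨p.1, lt_of_lt_of_le p.2 (Nat.sub_le n 1)⟩) q
          = y (w ⟨p.1 + 1, by have := p.2; omega⟩) q) ∧
    (∀ q : Fin m, (q : ℕ) = a p →
        y (w ⟨p.1, lt_of_lt_of_le p.2 (Nat.sub_le n 1)⟩) q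
          < y (w ⟨p.1 + 1, by have := p.2; omega⟩) q)

section InCell

variable {n m : ℕ} {w : Fin n → Fin n} {a : Fin (n - 1) → ℕ} {y : Fin n → Fin m → ℝ}

theorem strictMono_toLex_of_inCell (ha : ∀ p, a p < m) (hy : InCell w a y) :
    StrictMono fun i => toLex (y (w i)) :=
  strictMono_fin_of_lt_add_one fun p => ⟨⟨a p, ha p⟩, (hy p).1, (hy p).2 _ rfl⟩

theorem injective_of_inCell (hw : Function.Surjective w) (ha : ∀ p, a p < m)
    (hy : InCell w a y) : Function.Injective y :=
  ((strictMono_toLex_of_inCell ha hy).injective.of_comp (f := toLex)).of_comp_right hw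

end InCell

def raiseDir {n m : ℕ} (σ : Equiv.Perm (Fin n)) (a : Fin (n - 1) → ℕ) (q : Fin (n - 1)) :
    Fin n → Fin m → ℝ :=
  fun i l => if (l : ℕ) = a q ∧ q.1 < σ.symm i then 1 else 0

theorem inCell_add_smul_raiseDir {n m : ℕ} {σ : Equiv.Perm (Fin n)} {a : Fin (n - 1) → ℕ}
    {q : Fin (n - 1)} {y : Fin n → Fin m → ℝ} (hy : InCell σ (Function.update a q (a q + 1)) y)
    {ε : ℝ} (hε : 0 < ε) : InCell σ a (y + ε • raiseDir σ a q) := by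
  intro p
  obtain ⟨heq, hlt⟩ := hy p
  simp only [raiseDir, Pi.add_apply, Pi.smul_apply, smul_eq_mul, Equiv.symm_apply_apply]
  by_cases hpq : p = q
  · subst hpq
    simp only [Function.update_self] at heq hlt
    refine ⟨fun l hl => ?_, fun l hl => ?_⟩
    · rw [if_neg (by omega), if_neg (by omega), heq l (by omega)]
    · rw [if_neg (by omega), if_pos (by omega), heq l (by omega)]
      linarith
  · have hpq' : p.1 ≠ q.1 := fun h => hpq (Fin.ext h)
    simp only [Function.update_of_ne hpq] at heq hlt
    have hsame : ∀ l : Fin m, ((l : ℕ) = a q ∧ q.1 < p.1) ↔ ((l : ℕ) = a q ∧ q.1 < p.1 + 1) :=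
      fun l => by omega
    refine ⟨fun l hl => ?_, fun l hl => ?_⟩
    · rw [if_congr (hsame l) rfl rfl, heq l hl]
    · rw [if_congr (hsame l) rfl rfl]
      exact add_lt_add_left (hlt l hl) _

theorem increment_cell_subset_closure_general (n m : ℕ) (hm : 1 ≤ m)
    (w : Fin n → Fin n) (hw : Function.Bijective w)
    (a : Fin (n - 1) → ℕ) (ha : ∀ p, a p ≤ m - 1)
    (q : Fin (n - 1)) :
    cell n m w (Function.update a q (a q + 1)) ⊆ closure (cell n m w a) := by
  obtain ⟨σ, rfl⟩ : ∃ σ : Equiv.Perm (Fin n), ⇑σ = w := ⟨Equiv.ofBijective w hw, rfl⟩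
  have ha' : ∀ p, a p < m := fun p => by have := ha p; omega
  intro x hx
  rw [closure_subtype]
  refine mem_closure_of_tendsto (b := 𝓝[>] 0) (f := fun ε : ℝ => x.1 + ε • raiseDir σ a q) ?_ ?_
  · have hcont : Continuous fun ε : ℝ => x.1 + ε • raiseDir σ a q := by fun_prop
    exact (hcont.tendsto' 0 x.1 (by simp)).mono_left nhdsWithin_le_nhds
  · filter_upwards [self_mem_nhdsWithin] with ε hε
    have hcell := inCell_add_smul_raiseDir hx hε
    exact ⟨⟨_, injective_of_inCell σ.surjective ha' hcell⟩, hcell, rfl⟩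

/-- For `n, m ≥ 1`, a depth-ordering `(w; a)` with all `aₚ ≤ m - 1`, and an
index `q` with `a q + 1 ≤ m - 1`, the cell of the depth-ordering obtained by increasing the
`q`-th inequality label by one (keeping the same ordering of the points) is contained in the
closure of the cell of `(w; a)` in `Conf(n,m)`. -/
theorem increment_cell_subset_closure (n m : ℕ) (hn : 1 ≤ n) (hm : 1 ≤ m)
    (w : Fin n → Fin n) (hw : Function.Bijective w)
    (a : Fin (n - 1) → ℕ) (ha : ∀ p, a p ≤ m - 1)
    (q : Fin (n - 1)) (hq : a q + 1 ≤ m - 1) :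
    cell n m w (Function.update a q (a q + 1)) ⊆ closure (cell n m w a) :=
  increment_cell_subset_closure_general n m hm w hw a ha q

end FoxNeuwirth
end

section
/- Let n ≥ 1 and m ≥ 2. The configuration space Conf(n,m) of n distinct labeled points in ℝ^m is path-connected when m ≥ 2, and more generally it is (m−2)-connected: for every k with 1 ≤ k ≤ m−2 and every basepoint, the k-th homotopy group of Conf(n,m) is trivial. -/
/-!
A `k`-cube in `Conf(n,m)` with boundary at the basepoint `x` is first deformed, rel boundary, into
a locally Lipschitz one `g`. The directions `c • (g y i - g y j)` then fill a set of Hausdorff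
dimension at most `k + 1 < m`, so some `v` avoids all of them and all those of `x`. Moving every
configuration in a straight line towards the collinear configuration `i ↦ (i + 1) • v` then keeps
the points distinct: this contracts `g`, with the boundary travelling along a path from `x`, and
such a contraction can be reparametrized into one that fixes the boundary. Path-connectedness is
the case `k = 0`.
-/

namespace FoxNeuwirth

open Set Function
open scoped unitInterval Topology Topology.Homotopy ENNReal

theorem _root_.LocallyLipschitz.smul {α E : Type*} [PseudoEMetricSpace α] [NormedAddCommGroup E]
    [NormedSpace ℝ E] {c : α → ℝ} {g : α → E} (hc : LocallyLipschitz c)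
    (hg : LocallyLipschitz g) : LocallyLipschitz fun a => c a • g a :=
  (contDiff_smul (𝕜 := ℝ) (F := E) (n := 1)).locallyLipschitz.comp (hc.prodMk hg)

theorem _root_.LocallyLipschitz.pi {α ι : Type*} [PseudoEMetricSpace α] [Fintype ι]
    {β : ι → Type*} [∀ i, PseudoEMetricSpace (β i)] {f : α → ∀ i, β i}
    (hf : ∀ i, LocallyLipschitz fun a => f a i) : LocallyLipschitz f := by
  intro a
  choose K t ht hK using fun i => hf i a
  refine ⟨Finset.univ.sup K, ⋂ i, t i, Filter.iInter_mem.2 ht, fun b hb c hc => ?_⟩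
  refine edist_pi_le_iff.2 fun i => (hK i (mem_iInter.1 hb i) (mem_iInter.1 hc i)).trans ?_
  gcongr
  exact Finset.le_sup (Finset.mem_univ i)

theorem isOpen_setOf_injective {ι X : Type*} [Finite ι] [TopologicalSpace X] [T2Space X] :
    IsOpen {z : ι → X | Injective z} := by
  simp only [Injective, Set.ofPred_forall]
  refine isOpen_iInter_of_finite fun i => isOpen_iInter_of_finite fun j => ?_
  by_cases hij : i = j
  · simp [hij]
  · simpa [hij] using isOpen_ne_fun (continuous_apply i) (continuous_apply j)

section LipschitzApproximation

variable {Y : Type*} [MetricSpace Y]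

variable (Y) in
def locallyLipschitzSubalgebra : Subalgebra ℝ C(Y, ℝ) where
  carrier := {φ | LocallyLipschitz φ}
  mul_mem' hφ hψ := hφ.smul hψ
  add_mem' hφ hψ := hφ.add hψ
  algebraMap_mem' r := LocallyLipschitz.const r

theorem locallyLipschitzSubalgebra_separatesPoints :
    (locallyLipschitzSubalgebra Y).SeparatesPoints := by
  intro y z hyz
  refine ⟨fun w => dist w z, ⟨⟨fun w => dist w z, continuous_id.dist continuous_const⟩,
    (LipschitzWith.dist_left z).locallyLipschitz, rfl⟩, ?_⟩
  simpa using hyz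

variable [CompactSpace Y]

theorem exists_locallyLipschitz_near_real (F : C(Y, ℝ)) {ε : ℝ} (hε : 0 < ε) :
    ∃ g : Y → ℝ, LocallyLipschitz g ∧ ∀ y, dist (g y) (F y) < ε := by
  obtain ⟨⟨g, hg⟩, hgF⟩ :=
    ContinuousMap.exists_mem_subalgebra_near_continuousMap_of_separatesPoints _
      locallyLipschitzSubalgebra_separatesPoints F ε hε
  rw [← dist_eq_norm] at hgF
  exact ⟨g, hg, fun y => (ContinuousMap.dist_apply_le_dist y).trans_lt hgF⟩

theorem exists_locallyLipschitz_near {E : Type*} [NormedAddCommGroup E] [NormedSpace ℝ E]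
    [FiniteDimensional ℝ E] (F : C(Y, E)) {ε : ℝ} (hε : 0 < ε) :
    ∃ g : Y → E, LocallyLipschitz g ∧ ∀ y, dist (g y) (F y) < ε := by
  let e := (Module.finBasis ℝ E).equivFunL
  set K := ‖(e.symm : (Fin (Module.finrank ℝ E) → ℝ) →L[ℝ] E)‖₊
  have hδ : 0 < ε / (K + 1) := by positivity
  choose g hg hgF using fun i =>
    exists_locallyLipschitz_near_real ⟨fun y => e (F y) i, by fun_prop⟩ hδ
  refine ⟨fun y => e.symm fun i => g i y, e.symm.lipschitz.locallyLipschitz.comp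
    (LocallyLipschitz.pi hg), fun y => ?_⟩
  have hclose : dist (fun i => g i y) (e (F y)) < ε / (K + 1) :=
    (dist_pi_lt_iff hδ).2 (hgF · y)
  calc dist (e.symm fun i => g i y) (F y)
      = dist (e.symm fun i => g i y) (e.symm (e (F y))) := by rw [e.symm_apply_apply]
    _ ≤ K * dist (fun i => g i y) (e (F y)) := e.symm.lipschitz.dist_le_mul _ _
    _ ≤ K * (ε / (K + 1)) := by gcongr
    _ < (K + 1) * (ε / (K + 1)) := by gcongr; linarith
    _ = ε := mul_div_cancel₀ _ (by positivity)

end LipschitzApproximation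

section DiffCone

variable {P E : Type*} {n : ℕ}

section Module

variable [AddCommGroup E] [Module ℝ E]

def diffCone (g : P → Fin n → E) : Set E :=
  ⋃ (i : Fin n) (j : Fin n), range fun q : ℝ × P => q.1 • (g q.2 i - g q.2 j)

theorem smul_sub_mem_diffCone (g : P → Fin n → E) (c : ℝ) (p : P) (i j : Fin n) :
    c • (g p i - g p j) ∈ diffCone g :=
  mem_iUnion₂.2 ⟨i, j, (c, p), rfl⟩

def rayConfig (v : E) : Fin n → E := fun i => ((i : ℕ) + 1 : ℝ) • v

theorem injective_smul_add_smul_rayConfig {z : Fin n → E} (hz : Injective z) {v : E}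
    (hv : ∀ (c : ℝ) (i j : Fin n), c • (z i - z j) ≠ v) {s : ℝ} (hs : 0 ≤ s) :
    Injective ((1 - s) • z + s • rayConfig v) := by
  intro i j hij
  by_contra hne
  have key : (1 - s) • (z i - z j) = (s * ((j : ℕ) - (i : ℕ) : ℝ)) • v := by
    simp only [Pi.add_apply, Pi.smul_apply, rayConfig] at hij
    linear_combination (norm := module) hij
  rcases hs.eq_or_lt with rfl | hs
  · exact hne (hz (by simpa [sub_eq_zero] using key))
  · have hji : ((j : ℕ) - (i : ℕ) : ℝ) ≠ 0 :=
      sub_ne_zero.2 fun h => hne (Fin.ext (Nat.cast_injective h)).symm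
    refine hv ((s * ((j : ℕ) - (i : ℕ) : ℝ))⁻¹ * (1 - s)) i j ?_
    rw [mul_smul, key, inv_smul_smul₀ (mul_ne_zero hs.ne' hji)]

end Module

theorem dimH_diffCone_le [NormedAddCommGroup P] [NormedSpace ℝ P] [FiniteDimensional ℝ P]
    [NormedAddCommGroup E] [NormedSpace ℝ E] {g : P → Fin n → E} (hg : LocallyLipschitz g) :
    dimH (diffCone g) ≤ Module.finrank ℝ P + 1 := by
  refine (dimH_iUnion _).le.trans <| iSup_le fun i =>
    (dimH_iUnion _).le.trans <| iSup_le fun j => ?_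
  have hcomp : ∀ k : Fin n, LocallyLipschitz fun q : ℝ × P => g q.2 k := fun k =>
    (LipschitzWith.eval k).locallyLipschitz.comp (hg.comp LipschitzWith.prod_snd.locallyLipschitz)
  have hφ : LocallyLipschitz fun q : ℝ × P => q.1 • (g q.2 i - g q.2 j) :=
    LipschitzWith.prod_fst.locallyLipschitz.smul ((hcomp i).sub (hcomp j))
  calc dimH (range fun q : ℝ × P => q.1 • (g q.2 i - g q.2 j))
      ≤ dimH (univ : Set (ℝ × P)) := dimH_range_le_of_locally_lipschitzOn hφ
    _ = Module.finrank ℝ P + 1 := by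
      rw [Real.dimH_univ_eq_finrank, Module.finrank_prod, Module.finrank_self, add_comm]
      push_cast; rfl

end DiffCone

section Cube

variable {N : Type*}

noncomputable def cubeScale (c : ℝ) (y : I^N) : I^N :=
  fun i => projIcc 0 1 zero_le_one (1 / 2 + c * (y i - 1 / 2))

theorem continuous_cubeScale : Continuous fun p : ℝ × I^N => cubeScale p.1 p.2 :=
  continuous_pi fun _ => continuous_projIcc.comp (by fun_prop)

@[simp]
theorem cubeScale_one (y : I^N) : cubeScale 1 y = y :=
  funext fun i => by simp [cubeScale]

variable [Fintype N]

def cubeRadius (y : I^N) : ℝ := ‖fun i => 2 * (y i : ℝ) - 1‖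

theorem cubeRadius_le_one (y : I^N) : cubeRadius y ≤ 1 :=
  (pi_norm_le_iff_of_nonneg zero_le_one).2 fun i => abs_le.2
    ⟨by linarith [(y i).2.1], by linarith [(y i).2.2]⟩

theorem cubeRadius_eq_one_of_mem_boundary {y : I^N} (hy : y ∈ Cube.boundary N) :
    cubeRadius y = 1 := by
  obtain ⟨i, hi⟩ := hy
  refine (cubeRadius_le_one y).antisymm ?_
  calc (1 : ℝ) = ‖2 * (y i : ℝ) - 1‖ := by rcases hi with h | h <;> norm_num [h]
    _ ≤ cubeRadius y := norm_le_pi_norm (fun i => 2 * (y i : ℝ) - 1) i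

theorem lipschitzWith_cubeRadius : LipschitzWith 2 (cubeRadius (N := N)) := by
  have h : LipschitzWith 2 fun y : I^N => fun i => 2 * (y i : ℝ) - 1 :=
    LipschitzWith.of_dist_le_mul fun a b => (dist_pi_le_iff (by positivity)).2 fun i => by
      rw [Real.dist_eq, show 2 * (a i : ℝ) - 1 - (2 * b i - 1) = 2 * (a i - b i) by ring,
        abs_mul, abs_two, ← Real.dist_eq, ← Subtype.dist_eq]
      push_cast
      exact mul_le_mul_of_nonneg_left (dist_le_pi_dist a b i) zero_le_two
  have := lipschitzWith_one_norm.comp h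
  rwa [one_mul] at this

theorem continuous_cubeRadius : Continuous (cubeRadius (N := N)) :=
  lipschitzWith_cubeRadius.continuous

theorem cubeScale_mem_boundary {c : ℝ} {y : I^N} (h : 1 ≤ c * cubeRadius y) :
    cubeScale c y ∈ Cube.boundary N := by
  have hc : 0 < c := pos_of_mul_pos_left (one_pos.trans_le h) (norm_nonneg _)
  obtain ⟨i, hi⟩ : ∃ i, 1 ≤ |c * (2 * (y i : ℝ) - 1)| := by
    by_contra! hlt
    have : ‖c • fun i => 2 * (y i : ℝ) - 1‖ < 1 :=
      (pi_norm_lt_iff one_pos).2 fun i => by simpa [Real.norm_eq_abs] using hlt i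
    rw [norm_smul, Real.norm_of_nonneg hc.le] at this
    exact this.not_ge h
  refine ⟨i, ?_⟩
  rcases le_abs'.1 hi with hi | hi
  · exact Or.inl (projIcc_of_le_left _ (by linarith))
  · exact Or.inr (projIcc_of_right_le _ (by linarith))

theorem exists_locallyLipschitz_near_eq_on_boundary {E : Type*} [NormedAddCommGroup E]
    [NormedSpace ℝ E] [FiniteDimensional ℝ E] {F : (I^N) → E} (hF : Continuous F) {e : E}
    (hFe : ∀ y, 1 / 2 ≤ cubeRadius y → F y = e) {ε : ℝ} (hε : 0 < ε) :
    ∃ G : (I^N) → E, LocallyLipschitz G ∧ (∀ y ∈ Cube.boundary N, G y = e) ∧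
      ∀ y, dist (G y) (F y) < ε := by
  obtain ⟨p, hp, hpF⟩ := exists_locallyLipschitz_near ⟨fun y => F y - e, by fun_prop⟩ hε
  -- a cut-off equal to `1` wherever `F` may differ from `e`, and to `0` on the boundary
  let β : (I^N) → ℝ := fun y => min 1 (2 - 2 * cubeRadius y)
  have hβ : LocallyLipschitz β := ((LocallyLipschitz.const 2).sub
    ((LocallyLipschitz.const (2 : ℝ)).smul lipschitzWith_cubeRadius.locallyLipschitz)).const_min 1
  refine ⟨fun y => e + β y • p y, (LocallyLipschitz.const e).add (hβ.smul hp),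
    fun y hy => by simp [β, cubeRadius_eq_one_of_mem_boundary hy], fun y => ?_⟩
  by_cases hρ : cubeRadius y ≤ 1 / 2
  · have hβ1 : β y = 1 := min_eq_left (by linarith)
    calc dist (e + β y • p y) (F y) = dist (p y) (F y - e) := by
          simp only [hβ1, one_smul, dist_eq_norm]; congr 1; abel
      _ < ε := hpF y
  · have hFy : F y = e := hFe y (by linarith)
    have hβ0 : 0 ≤ β y := le_min zero_le_one (by linarith [cubeRadius_le_one y])
    have hpy := hpF y
    simp only [ContinuousMap.coe_mk, hFy, sub_self, dist_zero_right] at hpy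
    calc dist (e + β y • p y) (F y) = |β y| * ‖p y‖ := by simp [hFy, dist_eq_norm, norm_smul]
      _ ≤ ‖p y‖ := mul_le_of_le_one_left (norm_nonneg _) (abs_le.2 ⟨by linarith, min_le_left _ _⟩)
      _ < ε := hpy

theorem exists_forall_smul_sub_ne {E : Type*} [NormedAddCommGroup E] [NormedSpace ℝ E]
    [FiniteDimensional ℝ E] {n : ℕ} (hN : Fintype.card N + 2 ≤ Module.finrank ℝ E)
    {g : (I^N) → Fin n → E} (hg : LocallyLipschitz g) (z : Fin n → E) :
    ∃ v : E, (∀ y (c : ℝ) i j, c • (g y i - g y j) ≠ v) ∧ ∀ (c : ℝ) i j, c • (z i - z j) ≠ v := by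
  let clamp : (N → ℝ) → I^N := fun u i => projIcc 0 1 zero_le_one (u i)
  have hclamp : LipschitzWith 1 clamp := LipschitzWith.of_dist_le_mul fun a b => by
    simpa using (dist_pi_le_iff dist_nonneg).2 fun i =>
      ((LipschitzWith.projIcc zero_le_one).dist_le_mul (a i) (b i)).trans
        (by simpa using dist_le_pi_dist a b i)
  obtain ⟨v, hv⟩ : (diffCone (g ∘ clamp) ∪ diffCone fun _ : N → ℝ => z)ᶜ.Nonempty := by
    refine (dense_compl_of_dimH_lt_finrank ?_).nonempty
    have hlt : (Module.finrank ℝ (N → ℝ) + 1 : ℝ≥0∞) < Module.finrank ℝ E := by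
      rw [Module.finrank_fintype_fun_eq_card]
      exact_mod_cast hN
    rw [dimH_union]
    exact max_lt ((dimH_diffCone_le (hg.comp hclamp.locallyLipschitz)).trans_lt hlt)
      ((dimH_diffCone_le (LocallyLipschitz.const z)).trans_lt hlt)
  rw [mem_compl_iff, mem_union, not_or] at hv
  refine ⟨v, fun y c i j h => hv.1 (h ▸ ?_),
    fun c i j h => hv.2 (h ▸ smul_sub_mem_diffCone _ c 0 i j)⟩
  simpa [clamp] using smul_sub_mem_diffCone (g ∘ clamp) c (fun i => y i) i j

end Cube

section GenLoop

variable {N X : Type*} [TopologicalSpace X] {x : X}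

theorem GenLoop.homotopic_of_continuous {f g : Ω^ N X x} (H : (I × I^N) → X) (hH : Continuous H)
    (h0 : ∀ y, H (0, y) = f y) (h1 : ∀ y, H (1, y) = g y)
    (hb : ∀ t, ∀ y ∈ Cube.boundary N, H (t, y) = x) : GenLoop.Homotopic f g :=
  ⟨{ toFun := H
     continuous_toFun := hH
     map_zero_left := h0
     map_one_left := h1
     prop' := fun t y hy => (hb t y hy).trans (f.2 y hy).symm }⟩

theorem GenLoop.homotopic_const_of_eq_comp_path {w : X} (γ : Path x w) (g : Ω^ N X x)
    (τ : (I^N) → I) (hτ : Continuous τ) (hτ0 : ∀ y ∈ Cube.boundary N, τ y = 0)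
    (hg : ∀ y, g y = γ (τ y)) : GenLoop.Homotopic g GenLoop.const :=
  GenLoop.homotopic_of_continuous (fun p => γ (σ p.1 * τ p.2)) (by fun_prop)
    (fun y => by simp [hg]) (fun y => by simp) (fun t y hy => by simp [hτ0 y hy])

variable [Fintype N]

theorem GenLoop.exists_homotopic_eq_of_half_le_cubeRadius (f : Ω^ N X x) :
    ∃ f' : Ω^ N X x, GenLoop.Homotopic f f' ∧ ∀ y, 1 / 2 ≤ cubeRadius y → f' y = x := by
  have hscale : ∀ {c : ℝ}, 1 ≤ c → ∀ y ∈ Cube.boundary N, f (cubeScale c y) = x :=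
    fun hc y hy => f.2 _ (cubeScale_mem_boundary (by
      rw [cubeRadius_eq_one_of_mem_boundary hy]; linarith))
  refine ⟨⟨⟨fun y => f (cubeScale 2 y), ?_⟩, hscale one_le_two⟩,
    GenLoop.homotopic_of_continuous (fun p => f (cubeScale (1 + p.1) p.2)) ?_ ?_ ?_ ?_,
    fun y hy => f.2 _ (cubeScale_mem_boundary (by linarith))⟩
  · exact f.1.continuous.comp (continuous_cubeScale.comp (continuous_const.prodMk continuous_id))
  · exact f.1.continuous.comp (continuous_cubeScale.comp
      ((continuous_const.add (continuous_subtype_val.comp continuous_fst)).prodMk continuous_snd))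
  · simp
  · intro y; norm_num; rfl
  · exact fun t y hy => hscale (by linarith [t.2.1]) y hy

theorem GenLoop.homotopic_const_of_homotopy_along_path {w : X} (f : Ω^ N X x) (γ : Path x w)
    (H : (I × I^N) → X) (hH : Continuous H) (h0 : ∀ y, H (0, y) = f y)
    (h1 : ∀ y, H (1, y) = w) (hγ : ∀ s, ∀ y ∈ Cube.boundary N, H (s, y) = γ s) :
    GenLoop.Homotopic f GenLoop.const := by
  /- `(c - 1, cubeScale c y)` runs along the ray from `(-1, centre)` through `(0, y)`; for `t = 1`
  it is the point where this ray leaves `I × I^N`, through the top face (where `H` is `w`) or a side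
  face (where `H` follows `γ`). -/
  set c : I → (I^N) → ℝ := fun t y => (max (cubeRadius y) (1 - t / 2))⁻¹ with hc_def
  have hc : Continuous fun p : I × I^N => c p.1 p.2 :=
    ((continuous_cubeRadius.comp continuous_snd).max (by fun_prop)).inv₀ fun p =>
      (lt_max_of_lt_right (by linarith [p.1.2.2])).ne'
  have hc_one : ∀ t y, (t = 0 ∨ y ∈ Cube.boundary N) → c t y = 1 := by
    rintro t y (rfl | hy)
    · simp [hc_def, cubeRadius_le_one y]
    · simp [hc_def, cubeRadius_eq_one_of_mem_boundary hy, div_nonneg t.2.1 zero_le_two]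
  let K : (I × I^N) → X := fun p =>
    H (projIcc 0 1 zero_le_one (c p.1 p.2 - 1), cubeScale (c p.1 p.2) p.2)
  have hK : ∀ t y, c t y = 1 → K (t, y) = f y := fun t y h => by simp [K, h, ← h0]
  let τ : (I^N) → I := fun y => projIcc 0 1 zero_le_one (c 1 y - 1)
  have hτ : Continuous τ :=
    continuous_projIcc.comp ((hc.comp (continuous_const.prodMk continuous_id)).sub continuous_const)
  have hτ0 : ∀ y ∈ Cube.boundary N, τ y = 0 := fun y hy => by
    simp [τ, hc_one 1 y (Or.inr hy)]
  let g : Ω^ N X x := ⟨⟨fun y => γ (τ y), γ.continuous.comp hτ⟩, fun y hy => by simp [hτ0 y hy]⟩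
  refine (GenLoop.homotopic_of_continuous (g := g) K ?_ (fun y => hK 0 y (hc_one _ _ (Or.inl rfl)))
    ?_ fun t y hy => (hK t y (hc_one _ _ (Or.inr hy))).trans (f.2 y hy)).trans
    (GenLoop.homotopic_const_of_eq_comp_path γ g τ hτ hτ0 fun _ => rfl)
  · exact hH.comp ((continuous_projIcc.comp (hc.sub continuous_const)).prodMk
      (continuous_cubeScale.comp (hc.prodMk continuous_snd)))
  · intro y
    show K (1, y) = γ (τ y)
    by_cases hρ : cubeRadius y ≤ 1 / 2
    · have h2 : c 1 y = 2 := by norm_num [hc_def, hρ]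
      simp only [K, τ, h2]
      rw [projIcc_of_right_le _ (by norm_num)]
      exact (h1 _).trans γ.target.symm
    · have hcρ : 1 ≤ c 1 y * cubeRadius y := by
        have hρ' : 1 - ((1 : I) : ℝ) / 2 ≤ cubeRadius y := by norm_num; linarith
        simp only [hc_def]
        rw [max_eq_left hρ', inv_mul_cancel₀ (by linarith)]
      exact hγ _ _ (cubeScale_mem_boundary hcρ)

end GenLoop

section Conf

variable {n m : ℕ} {N : Type*} [Fintype N] {x : Conf n m}

theorem exists_locallyLipschitz_homotopic (f : Ω^ N (Conf n m) x) :
    ∃ g : Ω^ N (Conf n m) x, LocallyLipschitz (fun y => (g y).1) ∧ GenLoop.Homotopic f g := by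
  obtain ⟨f', hff', hf'x⟩ := GenLoop.exists_homotopic_eq_of_half_le_cubeRadius f
  let F : (I^N) → Fin n → Fin m → ℝ := fun y => (f' y).1
  have hF : Continuous F := continuous_subtype_val.comp f'.1.continuous
  obtain ⟨ε, hε, hthick⟩ := (isCompact_range hF).exists_thickening_subset_open
    isOpen_setOf_injective (range_subset_iff.2 fun y => (f' y).2)
  obtain ⟨G, hGl, hG, hGF⟩ := exists_locallyLipschitz_near_eq_on_boundary hF
    (fun y hy => congrArg Subtype.val (hf'x y hy)) hε
  have hseg : ∀ (t : I) y, Injective ((1 - (t : ℝ)) • F y + (t : ℝ) • G y) := fun t y =>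
    hthick <| Metric.mem_thickening_iff.2 ⟨F y, mem_range_self y, calc
      dist ((1 - (t : ℝ)) • F y + (t : ℝ) • G y) (F y) = (t : ℝ) * dist (G y) (F y) := by
        rw [dist_eq_norm, dist_eq_norm, ← norm_smul_of_nonneg t.2.1]
        congr 1; module
      _ ≤ dist (G y) (F y) := mul_le_of_le_one_left dist_nonneg t.2.2
      _ < ε := hGF y⟩
  have hGinj : ∀ y, Injective (G y) := fun y => by simpa using hseg 1 y
  let g : Ω^ N (Conf n m) x :=
    ⟨⟨fun y => ⟨G y, hGinj y⟩, hGl.continuous.subtype_mk hGinj⟩, fun y hy => Subtype.ext (hG y hy)⟩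
  refine ⟨g, hGl, hff'.trans (GenLoop.homotopic_of_continuous
    (fun q => ⟨(1 - (q.1 : ℝ)) • F q.2 + (q.1 : ℝ) • G q.2, hseg q.1 q.2⟩) ?_ ?_ ?_ ?_)⟩
  · have hGc := hGl.continuous
    exact Continuous.subtype_mk (by fun_prop) _
  · intro y; ext1; simp [F]
  · intro y; ext1; simp; rfl
  · intro t y hy
    ext1
    simp only [F, hG y hy, GenLoop.boundary f' y hy]
    module

theorem genLoop_homotopic_const (hN : Fintype.card N + 2 ≤ m) (f : Ω^ N (Conf n m) x) :
    GenLoop.Homotopic f GenLoop.const := by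
  obtain ⟨g, hg, hfg⟩ := exists_locallyLipschitz_homotopic f
  obtain ⟨v, hvg, hvx⟩ := exists_forall_smul_sub_ne (by simpa using hN) hg x.1
  let w : Conf n m :=
    ⟨rayConfig v, by simpa using injective_smul_add_smul_rayConfig x.2 hvx zero_le_one⟩
  let γ : Path x w :=
    { toFun := fun s => ⟨(1 - (s : ℝ)) • x.1 + (s : ℝ) • rayConfig v,
        injective_smul_add_smul_rayConfig x.2 hvx s.2.1⟩
      continuous_toFun := Continuous.subtype_mk (by fun_prop) _
      source' := by ext1; simp
      target' := by ext1; simp [w] }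
  refine hfg.trans (GenLoop.homotopic_const_of_homotopy_along_path g γ
    (fun q => ⟨(1 - (q.1 : ℝ)) • (g q.2).1 + (q.1 : ℝ) • rayConfig v,
      injective_smul_add_smul_rayConfig (g q.2).2 (hvg q.2) q.1.2.1⟩) ?_ ?_ ?_ ?_)
  · exact Continuous.subtype_mk (by have := hg.continuous; fun_prop) _
  · intro y; ext1; simp
  · intro y; ext1; simp [w]
  · intro s y hy; ext1; simp [γ, GenLoop.boundary g y hy]

theorem subsingleton_homotopyGroup (hN : Fintype.card N + 2 ≤ m) (x : Conf n m) :
    Subsingleton (HomotopyGroup N (Conf n m) x) :=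
  ⟨fun a b => Quotient.inductionOn₂ a b fun f g => Quotient.sound
    ((genLoop_homotopic_const hN f).trans (genLoop_homotopic_const hN g).symm)⟩

end Conf

theorem conf_is_highly_connected_general (n m : ℕ) (hm : 2 ≤ m) :
    PathConnectedSpace (Conf n m) ∧
    ∀ k : ℕ, 1 ≤ k → k ≤ m - 2 → ∀ x : Conf n m,
      Subsingleton (HomotopyGroup (Fin k) (Conf n m) x) := by
  refine ⟨?_, fun k _ hk x => subsingleton_homotopyGroup (by simp; omega) x⟩
  let x : Conf n m :=
    ⟨fun i _ => i, fun i j h => Fin.ext (Nat.cast_injective (congrFun h ⟨0, by omega⟩))⟩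
  have := subsingleton_homotopyGroup (N := Fin 0) (by simpa using hm) x
  exact pathConnectedSpace_iff_zerothHomotopy.2
    ⟨⟨.mk x⟩, (HomotopyGroup.pi0EquivZerothHomotopy (x := x)).symm.subsingleton⟩

/-- For `n ≥ 1` and `m ≥ 2`, the configuration space `Conf(n,m)` of `n`
distinct labeled points in `ℝ^m` is path-connected, and more generally `(m-2)`-connected:
for every `1 ≤ k ≤ m - 2` and every basepoint its `k`-th homotopy group is trivial. -/
theorem conf_is_highly_connected (n m : ℕ) (hn : 1 ≤ n) (hm : 2 ≤ m) :
    PathConnectedSpace (Conf n m) ∧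
    ∀ k : ℕ, 1 ≤ k → k ≤ m - 2 → ∀ x : Conf n m,
      Subsingleton (HomotopyGroup (Fin k) (Conf n m) x) :=
  conf_is_highly_connected_general n m hm

end FoxNeuwirth
end

section
/- In the mod-2 Fox–Neuwirth complex FN_4, the following elements are cocycles: (i) [a,0,0] + [0,a,0] + [0,0,a] for every a > 0; (ii) [a,0,b] + [b,0,a] for all 0 < a < b; (iii) [b,a,b] for all 0 ≤ a ≤ b. That is, δ annihilates each of these elements. -/
/-!
The `i`-th summand of `δ a` is a sum over the shuffles of the sub-runs of `x` with those of `y`,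
where `x` and `y` are the maximal runs of entries `> aᵢ` immediately to the left and to the right
of position `i`. Precomposing shuffles with `finAddFlip` shows that this sum is unchanged when `x`
and `y` are exchanged, and that it vanishes mod 2 when `x = y`, the reindexing then being a
fixed-point-free involution. For the tuples in the statement this gives
`δ[0,a,0] = δ[a,0,0] + δ[0,0,a]` and `δ[a,0,b] = δ[b,0,a]`, and makes every summand of
`δ[b,a,b]` vanish.
-/

namespace FoxNeuwirth

/-- The ambient space of formal mod-2 combinations of tuples of nonnegative integers.
The mod-2 Fox-Neuwirth complex `FN n` is spanned by the tuples of length `n - 1`. -/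
abbrev V : Type := List ℕ →₀ ZMod 2

/-- The set of `(k, N-k)`-shuffles: permutations of `Fin N` that are strictly
increasing on the first `k` positions and on the last `N - k` positions. -/
def shuffles (k N : ℕ) : Finset (Equiv.Perm (Fin N)) :=
  Finset.univ.filter fun σ =>
    (∀ p q : Fin N, p < q → (q : ℕ) < k → σ p < σ q) ∧
    (∀ p q : Fin N, p < q → k ≤ (p : ℕ) → σ p < σ q)

/-- The `i`-th summand (`i` is 0-indexed) of the mod-2 Fox-Neuwirth differential on a basis
tuple `a`: increment the `i`-th entry of `a` by one; in the resulting tuple locate the maximal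
run `A` of consecutive entries strictly greater than `aᵢ` containing position `i`; split `A`
at the entries equal to `aᵢ + 1` into its maximal sub-runs of entries strictly greater than
`aᵢ + 1` (of which `kk` lie weakly to the left of position `i`); sum, over all
`(kk, N - kk)`-shuffles of the `N` sub-runs, the tuple reassembled with single entries
`aᵢ + 1` separating consecutive sub-runs. -/
noncomputable def deltaTerm (a : List ℕ) (i : ℕ) : V :=
  let v := a.getD i 0
  let lcount := ((a.take i).reverse.takeWhile (fun x => decide (v < x))).length
  let j := i - lcount
  let rcount := ((a.drop (i + 1)).takeWhile (fun x => decide (v < x))).length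
  let pre := a.take j
  let suf := a.drop (i + rcount + 1)
  let A := ((a.set i (v + 1)).drop j).take (i - j + rcount + 1)
  let runs := A.splitOnP (fun x => x == v + 1)
  let kk := 1 + ((a.take i).drop j).countP (fun x => x == v + 1)
  ∑ σ ∈ shuffles kk runs.length,
    Finsupp.single
      (pre ++ List.intercalate [v + 1]
        (List.ofFn fun t : Fin runs.length =>
          runs.getD ((σ.symm t : Fin runs.length) : ℕ) []) ++ suf)
      (1 : ZMod 2)

/-- The differential of the mod-2 Fox-Neuwirth complex, `δ(a) = ∑ᵢ ∑_σ σ·a[i]`. -/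
noncomputable def delta : V →ₗ[ZMod 2] V :=
  Finsupp.linearCombination (ZMod 2) fun a : List ℕ =>
    ∑ i ∈ Finset.range a.length, deltaTerm a i


end FoxNeuwirth

theorem val_finAddFlip {m n : ℕ} (p : Fin (m + n)) :
    ((finAddFlip p : Fin (n + m)) : ℕ) = if (p : ℕ) < m then n + p else p - m := by
  split_ifs with h
  · rw [finAddFlip_apply_mk_left h]
  · rw [finAddFlip_apply_mk_right (Nat.not_lt.1 h) p.2]

theorem finAddFlip_finAddFlip {m n : ℕ} (p : Fin (m + n)) : finAddFlip (finAddFlip p) = p := by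
  ext
  rw [val_finAddFlip, val_finAddFlip]
  split_ifs <;> omega

theorem finAddFlip_symm_apply {m n : ℕ} (p : Fin (n + m)) :
    (finAddFlip : Fin (m + n) ≃ Fin (n + m)).symm p = finAddFlip p :=
  (Equiv.symm_apply_eq _).2 (finAddFlip_finAddFlip p).symm

theorem List.getD_append_finAddFlip {α : Type*} (L R : List α) (d : α)
    (p : Fin (L.length + R.length)) : (R ++ L).getD (finAddFlip p) d = (L ++ R).getD p d := by
  rw [val_finAddFlip]
  split_ifs with h
  · rw [List.getD_append_right _ _ _ _ (by omega), List.getD_append _ _ _ _ h]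
    congr 1; omega
  · rw [List.getD_append _ _ _ _ (by omega), List.getD_append_right _ _ _ _ (by omega)]

theorem List.length_takeWhile_lt_append {x r : List ℕ} {v : ℕ} (hx : ∀ w ∈ x, v < w)
    (hr : ∀ w ∈ r.head?, w ≤ v) :
    ((x ++ r).takeWhile fun w => decide (v < w)).length = x.length := by
  rw [List.takeWhile_append_of_pos (by simpa using hx)]
  cases r with
  | nil => simp
  | cons w _ => simp [Nat.not_lt.2 (hr w rfl)]

theorem List.length_splitOn {α : Type*} [BEq α] (c : α) (x : List α) :
    (x.splitOn c).length = x.count c + 1 := by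
  induction x with
  | nil => simp
  | cons w x ih =>
    rw [List.splitOn_cons_eq_if_modifyHead, List.count_cons]
    split <;> simp_all [List.length_modifyHead]

namespace FoxNeuwirth

/-- Reindexes a shuffle of the runs `L ++ R` as a shuffle of `R ++ L` with the same output word. -/
def shuffleFlip {m n : ℕ} (σ : Equiv.Perm (Fin (m + n))) : Equiv.Perm (Fin (n + m)) :=
  (finAddFlip.trans σ).trans (finCongr (Nat.add_comm m n))

theorem val_shuffleFlip_apply {m n : ℕ} (σ : Equiv.Perm (Fin (m + n))) (p : Fin (n + m)) :
    ((shuffleFlip σ p : Fin (n + m)) : ℕ) = σ (finAddFlip p) := rfl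

theorem shuffleFlip_shuffleFlip {m n : ℕ} (σ : Equiv.Perm (Fin (m + n))) :
    shuffleFlip (shuffleFlip σ) = σ := by
  ext p
  simp only [val_shuffleFlip_apply, finAddFlip_finAddFlip]

theorem shuffleFlip_mem_shuffles {m n : ℕ} {σ : Equiv.Perm (Fin (m + n))}
    (hσ : σ ∈ shuffles m (m + n)) : shuffleFlip σ ∈ shuffles n (n + m) := by
  simp only [shuffles, Finset.mem_filter, Finset.mem_univ, true_and] at hσ ⊢
  obtain ⟨hleft, hright⟩ := hσ
  have hflip := @val_finAddFlip n m
  refine ⟨fun p q hpq hq => ?_, fun p q hpq hp => ?_⟩ <;>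
    rw [Fin.lt_def, val_shuffleFlip_apply, val_shuffleFlip_apply, ← Fin.lt_def]
  · exact hright _ _ (by rw [Fin.lt_def, hflip, hflip]; split_ifs <;> omega)
      (by rw [hflip]; split_ifs <;> omega)
  · exact hleft _ _ (by rw [Fin.lt_def, hflip, hflip]; split_ifs <;> omega)
      (by rw [hflip]; split_ifs <;> omega)

theorem ofFn_getD_shuffleFlip {α : Type*} (L R : List α) (d : α)
    (σ : Equiv.Perm (Fin (L.length + R.length))) :
    List.ofFn (fun t : Fin (R.length + L.length) => (R ++ L).getD ((shuffleFlip σ).symm t) d) =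
      List.ofFn (fun t : Fin (L.length + R.length) => (L ++ R).getD (σ.symm t) d) := by
  rw [List.ofFn_congr (Nat.add_comm R.length L.length)]
  congr 1
  funext t
  have hsymm : (shuffleFlip σ).symm (Fin.cast (Nat.add_comm R.length L.length).symm t) =
      finAddFlip (σ.symm t) := by
    simp [shuffleFlip, finAddFlip_symm_apply]
  rw [hsymm, List.getD_append_finAddFlip]

/-- The inner sum of `deltaTerm`, with the prefix `l`, the suffix `r`, the separator `c` and the
number `N` of runs as parameters. -/
noncomputable def shuffleSum (l r : List ℕ) (c k N : ℕ) (runs : List (List ℕ)) : V :=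
  ∑ σ ∈ shuffles k N,
    Finsupp.single
      (l ++ List.intercalate [c]
        (List.ofFn fun t : Fin N => runs.getD ((σ.symm t : Fin N) : ℕ) []) ++ r)
      (1 : ZMod 2)

theorem shuffleSum_append_comm (l r : List ℕ) (c : ℕ) (L R : List (List ℕ)) :
    shuffleSum l r c L.length (L.length + R.length) (L ++ R) =
      shuffleSum l r c R.length (R.length + L.length) (R ++ L) := by
  refine Finset.sum_nbij' shuffleFlip shuffleFlip (fun σ => shuffleFlip_mem_shuffles)
    (fun σ => shuffleFlip_mem_shuffles) (fun σ _ => shuffleFlip_shuffleFlip σ)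
    (fun σ _ => shuffleFlip_shuffleFlip σ) fun σ _ => ?_
  rw [ofFn_getD_shuffleFlip]

/-- `shuffleFlip` is a fixed-point-free involution of the shuffles of `L ++ L` preserving the
summand, so the terms cancel in pairs. -/
theorem shuffleSum_append_self (l r : List ℕ) (c : ℕ) {L : List (List ℕ)} (hL : L ≠ []) :
    shuffleSum l r c L.length (L.length + L.length) (L ++ L) = 0 := by
  have hpos : 0 < L.length := List.length_pos_iff.2 hL
  refine Finset.sum_involution (fun σ _ => shuffleFlip σ) (fun σ _ => ?_) (fun σ _ _ => ?_)
    (fun σ => shuffleFlip_mem_shuffles) (fun σ _ => shuffleFlip_shuffleFlip σ)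
  · rw [ofFn_getD_shuffleFlip]
    exact ZModModule.add_self _
  · intro h
    have h0 := congrArg Fin.val (DFunLike.congr_fun h ⟨0, by omega⟩)
    rw [val_shuffleFlip_apply, finAddFlip_apply_mk_left hpos, Fin.val_inj] at h0
    exact hL (by simpa using σ.injective h0)

theorem deltaTerm_eq_shuffleSum {a : List ℕ} {i v lc rc : ℕ} (hv : a.getD i 0 = v)
    (hlc : ((a.take i).reverse.takeWhile (fun w => decide (v < w))).length = lc)
    (hrc : ((a.drop (i + 1)).takeWhile (fun w => decide (v < w))).length = rc) :
    deltaTerm a i =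
      let runs :=
        (((a.set i (v + 1)).drop (i - lc)).take (i - (i - lc) + rc + 1)).splitOn (v + 1)
      shuffleSum (a.take (i - lc)) (a.drop (i + rc + 1)) (v + 1)
        (1 + ((a.take i).drop (i - lc)).countP (· == v + 1)) runs.length runs := by
  subst hv hlc hrc
  rfl

/-- The hypotheses say that `x` and `y` are the maximal runs of entries `> v` immediately to the
left and to the right of `v`. -/
theorem deltaTerm_of_run (l x y r : List ℕ) (v : ℕ)
    (hl : ∀ w ∈ l.getLast?, w ≤ v) (hx : ∀ w ∈ x, v < w) (hy : ∀ w ∈ y, v < w)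
    (hr : ∀ w ∈ r.head?, w ≤ v) :
    deltaTerm (l ++ x ++ v :: y ++ r) (l.length + x.length) =
      shuffleSum l r (v + 1) (x.splitOn (v + 1)).length
        ((x.splitOn (v + 1)).length + (y.splitOn (v + 1)).length)
        (x.splitOn (v + 1) ++ y.splitOn (v + 1)) := by
  set a := l ++ x ++ v :: y ++ r
  have ha : a = (l ++ x) ++ (v :: (y ++ r)) := by simp [a]
  have htake : a.take (l.length + x.length) = l ++ x := by
    rw [ha, ← List.length_append, List.take_left]
  have hdrop : a.drop (l.length + x.length + 1) = y ++ r := by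
    rw [ha, ← List.length_append, List.drop_append]; simp
  have hv : a.getD (l.length + x.length) 0 = v := by
    rw [ha, ← List.length_append]; simp
  have hlc : (((a.take (l.length + x.length)).reverse.takeWhile
      (fun w => decide (v < w))).length) = x.length := by
    rw [htake, List.reverse_append, List.length_takeWhile_lt_append (by simpa using hx)
      (by simpa using hl), List.length_reverse]
  have hrc : ((a.drop (l.length + x.length + 1)).takeWhile
      (fun w => decide (v < w))).length = y.length := by
    rw [hdrop]
    exact List.length_takeWhile_lt_append hy hr
  have hrun : ((a.set (l.length + x.length) (v + 1)).drop l.length).take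
      (x.length + y.length + 1) = x ++ (v + 1) :: y := by
    simp [a, List.take_append, List.take_of_length_le, Nat.add_assoc]
  rw [deltaTerm_eq_shuffleSum hv hlc hrc]
  dsimp only
  rw [Nat.add_sub_cancel, Nat.add_sub_cancel_left, hrun, List.splitOn_append_cons_self, htake,
    List.drop_left, List.length_append, List.length_splitOn]
  congr 1
  · rw [ha, List.take_append_of_le_length (by simp), List.take_append_of_le_length le_rfl,
      List.take_length]
  · simp [a, Nat.add_assoc]
  · rw [List.count, Nat.add_comm]

theorem deltaTerm_run_comm (l x y r : List ℕ) (v : ℕ)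
    (hl : ∀ w ∈ l.getLast?, w ≤ v) (hx : ∀ w ∈ x, v < w) (hy : ∀ w ∈ y, v < w)
    (hr : ∀ w ∈ r.head?, w ≤ v) :
    deltaTerm (l ++ x ++ v :: y ++ r) (l.length + x.length) =
      deltaTerm (l ++ y ++ v :: x ++ r) (l.length + y.length) := by
  rw [deltaTerm_of_run l x y r v hl hx hy hr, deltaTerm_of_run l y x r v hl hy hx hr,
    shuffleSum_append_comm]

theorem deltaTerm_run_self (l x r : List ℕ) (v : ℕ)
    (hl : ∀ w ∈ l.getLast?, w ≤ v) (hx : ∀ w ∈ x, v < w) (hr : ∀ w ∈ r.head?, w ≤ v) :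
    deltaTerm (l ++ x ++ v :: x ++ r) (l.length + x.length) = 0 := by
  rw [deltaTerm_of_run l x x r v hl hx hx hr]
  exact shuffleSum_append_self _ _ _ (List.splitOn_ne_nil _ _)

theorem delta_single (a : List ℕ) :
    delta (Finsupp.single a 1) = ∑ i ∈ Finset.range a.length, deltaTerm a i := by
  simp [delta]

theorem delta_single_triple (x y z : ℕ) :
    delta (Finsupp.single [x, y, z] 1) =
      deltaTerm [x, y, z] 0 + deltaTerm [x, y, z] 1 + deltaTerm [x, y, z] 2 := by
  simp [delta_single, Finset.sum_range_succ]

section Triple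

variable {x y z : ℕ}

theorem deltaTerm_triple_zero_eq_zero (h : y ≤ x) : deltaTerm [x, y, z] 0 = 0 :=
  deltaTerm_run_self [] [] [y, z] x (by simp) (by simp) (by simpa)

theorem deltaTerm_triple_one_eq_zero (hx : x ≤ y) (hz : z ≤ y) : deltaTerm [x, y, z] 1 = 0 :=
  deltaTerm_run_self [x] [] [z] y (by simpa) (by simp) (by simpa)

theorem deltaTerm_triple_two_eq_zero (h : y ≤ z) : deltaTerm [x, y, z] 2 = 0 :=
  deltaTerm_run_self [x, y] [] [] z (by simpa) (by simp) (by simp)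

end Triple

theorem delta_single_zero_a_zero_eq_add {a : ℕ} (ha : 0 < a) :
    delta (Finsupp.single [0, a, 0] 1) =
      delta (Finsupp.single [a, 0, 0] 1) + delta (Finsupp.single [0, 0, a] 1) := by
  have hleft : deltaTerm [0, a, 0] 0 = deltaTerm [a, 0, 0] 1 :=
    deltaTerm_run_comm [] [] [a] [0] 0 (by simp) (by simp) (by simpa) (by simp)
  have hright : deltaTerm [0, a, 0] 2 = deltaTerm [0, 0, a] 1 :=
    deltaTerm_run_comm [0] [a] [] [] 0 (by simp) (by simpa) (by simp) (by simp)
  simp only [delta_single_triple, hleft, hright, deltaTerm_triple_one_eq_zero ha.le ha.le,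
    deltaTerm_triple_zero_eq_zero (Nat.zero_le _), deltaTerm_triple_two_eq_zero (Nat.zero_le _),
    zero_add, add_zero]

theorem delta_single_a_zero_b_comm {a b : ℕ} (ha : 0 < a) (hb : 0 < b) :
    delta (Finsupp.single [a, 0, b] 1) = delta (Finsupp.single [b, 0, a] 1) := by
  have hmid : deltaTerm [a, 0, b] 1 = deltaTerm [b, 0, a] 1 :=
    deltaTerm_run_comm [] [a] [b] [] 0 (by simp) (by simpa) (by simpa) (by simp)
  simp only [delta_single_triple, hmid, deltaTerm_triple_zero_eq_zero (Nat.zero_le _),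
    deltaTerm_triple_two_eq_zero (Nat.zero_le _)]

theorem delta_single_b_a_b_eq_zero {a b : ℕ} (hab : a ≤ b) :
    delta (Finsupp.single [b, a, b] 1) = 0 := by
  have hmid : deltaTerm [b, a, b] 1 = 0 := by
    rcases hab.eq_or_lt with rfl | hlt
    · exact deltaTerm_triple_one_eq_zero le_rfl le_rfl
    · exact deltaTerm_run_self [] [b] [] a (by simp) (by simpa) (by simp)
  rw [delta_single_triple, deltaTerm_triple_zero_eq_zero hab, hmid,
    deltaTerm_triple_two_eq_zero hab, add_zero, add_zero]

/-- In the mod-2 Fox-Neuwirth complex `FN 4` the following elements are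
cocycles: `[a,0,0] + [0,a,0] + [0,0,a]` for `a > 0`; `[a,0,b] + [b,0,a]` for `0 < a < b`;
and `[b,a,b]` for `0 ≤ a ≤ b`. -/
theorem bs4_cocycles :
    (∀ a : ℕ, 0 < a →
      delta (Finsupp.single [a, 0, 0] 1 + Finsupp.single [0, a, 0] 1
        + Finsupp.single [0, 0, a] 1) = 0) ∧
    (∀ a b : ℕ, 0 < a → a < b →
      delta (Finsupp.single [a, 0, b] 1 + Finsupp.single [b, 0, a] 1) = 0) ∧
    (∀ a b : ℕ, a ≤ b →
      delta (Finsupp.single [b, a, b] (1 : ZMod 2)) = 0) := by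
  refine ⟨fun a ha => ?_, fun a b ha hab => ?_, fun a b hab => delta_single_b_a_b_eq_zero hab⟩
  · rw [map_add, map_add, delta_single_zero_a_zero_eq_add ha, ← add_assoc, ZModModule.add_self,
      zero_add, ZModModule.add_self]
  · rw [map_add, delta_single_a_zero_b_comm ha (ha.trans hab), ZModModule.add_self]

end FoxNeuwirth
end

section
/- Let ℓ ≥ 0 and n ≥ 1, and let g_{ℓ,n} ∈ FN_{n·2^ℓ} be the basis tuple of degree n(2^ℓ−1) consisting of n runs of 2^ℓ−1 consecutive entries equal to 1, separated by single entries equal to 0. Then g_{ℓ,n} is a cocycle: δ(g_{ℓ,n}) = 0 in the mod-2 Fox–Neuwirth complex FN_{n·2^ℓ}. -/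
/-!
At a position holding the maximal entry `1` of `g_{ℓ,n}`, the run `A` of the differential is
the single entry `2`, which splits into two empty sub-runs; at a position holding `0` it is
`1^(2^(ℓ+1) - 1)`, which splits into `2^(ℓ+1)` empty sub-runs, `2^ℓ` of them on the left. In
both cases every `(k, k)`-shuffle yields the same tuple, and there is an even number of them:
precomposing with the rotation by `k` of `Fin (2k)`, which exchanges the two blocks, is a
fixed-point-free involution of the set of `(k, k)`-shuffles.
-/

namespace List

variable {α : Type*} {p : α → Bool}

lemma splitOnP_replicate {x : α} (hx : p x) (n : ℕ) :
    (replicate n x).splitOnP p = replicate (n + 1) [] := by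
  induction n with
  | zero => rfl
  | succ n ih => rw [replicate_succ, splitOnP_cons_eq_if_modifyHead, if_pos hx, ih]; rfl

lemma takeWhile_eq_nil_of_forall_mem_head? {l : List α} (h : ∀ x ∈ l.head?, p x = false) :
    l.takeWhile p = [] := by
  cases l with
  | nil => rfl
  | cons x l => simp [h x rfl]

end List

namespace FoxNeuwirth

/-- The Hopf ring generator `g_{ℓ,n}`: the basis tuple of `FN (n·2^ℓ)` of degree
`n·(2^ℓ - 1)` consisting of `n` runs of `2^ℓ - 1` consecutive entries equal to `1`,
separated by single entries equal to `0`. -/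
def gList (l n : ℕ) : List ℕ :=
  List.intercalate [0] (List.replicate n (List.replicate (2 ^ l - 1) 1))


section Shuffles

variable {k : ℕ} [NeZero k]

def halfSwap (k : ℕ) [NeZero k] : Equiv.Perm (Fin (2 * k)) :=
  Equiv.addRight ⟨k, lt_two_mul_self (NeZero.pos k)⟩

lemma val_halfSwap (x : Fin (2 * k)) : (halfSwap k x : ℕ) = if x < k then x + k else x - k := by
  rw [halfSwap, Equiv.coe_addRight, Fin.val_add_eq_ite]
  split_ifs <;> simp only at * <;> omega

lemma halfSwap_mul_self : halfSwap k * halfSwap k = 1 := by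
  ext x
  rw [Equiv.Perm.mul_apply, val_halfSwap, val_halfSwap]
  split_ifs <;> simp only [Equiv.Perm.one_apply] <;> omega

lemma mul_halfSwap_mem_shuffles {σ : Equiv.Perm (Fin (2 * k))} (hσ : σ ∈ shuffles k (2 * k)) :
    σ * halfSwap k ∈ shuffles k (2 * k) := by
  simp only [shuffles, Finset.mem_filter, Finset.mem_univ, true_and, Equiv.Perm.mul_apply,
    Fin.lt_def] at hσ ⊢
  obtain ⟨hlow, hhigh⟩ := hσ
  refine ⟨fun p q hpq hq => hhigh _ _ ?_ ?_, fun p q hpq hp => hlow _ _ ?_ ?_⟩ <;>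
    simp only [val_halfSwap] <;> split_ifs <;> omega

theorem even_card_shuffles_two_mul : Even (shuffles k (2 * k)).card := by
  rw [← ZMod.natCast_eq_zero_iff_even, Finset.card_eq_sum_ones, Nat.cast_sum, Nat.cast_one]
  refine Finset.sum_involution (fun σ _ => σ * halfSwap k) (fun _ _ => rfl) (fun σ _ _ h => ?_)
    (fun _ => mul_halfSwap_mem_shuffles) (fun σ _ => by rw [mul_assoc, halfSwap_mul_self, mul_one])
  have h0 := congrArg Fin.val (σ.injective (congrArg (· ⟨0, Nat.pos_of_neZero _⟩) h))
  simp only [val_halfSwap] at h0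
  have hk := NeZero.pos k
  split_ifs at h0 <;> omega

end Shuffles

section Runs

open List

theorem deltaTerm_eq_zero_of_symmetric_run (P S : List ℕ) (v m : ℕ)
    (hP : ∀ x ∈ P.getLast?, x ≤ v) (hS : ∀ x ∈ S.head?, x ≤ v) :
    deltaTerm (P ++ replicate m (v + 1) ++ v :: replicate m (v + 1) ++ S) (P.length + m) = 0 := by
  set a := P ++ replicate m (v + 1) ++ v :: replicate m (v + 1) ++ S
  have hget : a.getD (P.length + m) 0 = v := by simp [a]
  have htake : a.take (P.length + m) = P ++ replicate m (v + 1) := by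
    simp [a, take_length_add_append, take_left']
  have hdrop : a.drop (P.length + m + 1) = replicate m (v + 1) ++ S := by
    simp [a, add_assoc, drop_append, drop_replicate]
  have hpre : a.take P.length = P := by simp [a]
  have hsuf : a.drop (P.length + m + m + 1) = S := by
    simp [a, add_assoc, drop_append, drop_replicate]
  have hA : ((a.set (P.length + m) (v + 1)).drop P.length).take (m + m + 1)
      = replicate (m + m + 1) (v + 1) := by
    rw [show m + m + 1 = m + (m + 1) from by omega, replicate_add, replicate_succ]
    simp [a, set_append_right, take_append, take_replicate]
  have hleft : (P ++ replicate m (v + 1)).reverse.takeWhile (v < ·) = replicate m (v + 1) := by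
    rw [reverse_append, reverse_replicate, takeWhile_append_of_pos (by simp),
      takeWhile_eq_nil_of_forall_mem_head? (by simpa using hP), append_nil]
  have hright : (replicate m (v + 1) ++ S).takeWhile (v < ·) = replicate m (v + 1) := by
    rw [takeWhile_append_of_pos (by simp),
      takeWhile_eq_nil_of_forall_mem_head? (by simpa using hS), append_nil]
  simp only [deltaTerm]
  rw [hget, htake, hleft, hdrop, hright, length_replicate, Nat.add_sub_cancel,
    Nat.add_sub_cancel_left, hA, splitOnP_replicate (by simp), hpre, hsuf, drop_left,
    countP_replicate, if_pos (by simp)]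
  simp only [getD_eq_getElem?_getD, getElem?_getD_replicate_default_eq, Finset.sum_const]
  rw [length_replicate,
    add_comm 1 m, show m + m + 1 + 1 = 2 * (m + 1) by omega, ← Nat.cast_smul_eq_nsmul (ZMod 2),
    ZMod.natCast_eq_zero_iff_even.2 even_card_shuffles_two_mul, zero_smul]

theorem deltaTerm_eq_zero_of_forall_le {a : List ℕ} {i : ℕ} (hi : i < a.length)
    (h : ∀ x ∈ a, x ≤ a[i]) : deltaTerm a i = 0 := by
  have key := deltaTerm_eq_zero_of_symmetric_run (a.take i) (a.drop (i + 1)) a[i] 0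
    (fun x hx => h x (mem_of_mem_take (mem_of_mem_getLast? hx)))
    (fun x hx => h x (mem_of_mem_drop (mem_of_mem_head? hx)))
  simpa [getElem_cons_drop, hi.le] using key

lemma gList_one (l : ℕ) : gList l 1 = replicate (2 ^ l - 1) 1 := by
  simp [gList]

lemma gList_succ_succ (l n : ℕ) :
    gList l (n + 2) = replicate (2 ^ l - 1) 1 ++ 0 :: gList l (n + 1) := by
  simp [gList, replicate_succ]

lemma le_one_of_mem_gList {l n x : ℕ} (hx : x ∈ gList l n) : x ≤ 1 := by
  induction n with
  | zero => simp [gList] at hx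
  | succ n ih =>
    cases n with
    | zero => rw [gList_one] at hx; exact (eq_of_mem_replicate hx).le
    | succ n =>
      rw [gList_succ_succ, mem_append, mem_cons] at hx
      rcases hx with hx | rfl | hx
      · exact (eq_of_mem_replicate hx).le
      · exact zero_le_one
      · exact ih hx

lemma exists_gList_eq_replicate_append (l n : ℕ) :
    ∃ S, gList l (n + 1) = replicate (2 ^ l - 1) 1 ++ S ∧ ∀ x ∈ S.head?, x ≤ 0 := by
  cases n with
  | zero => exact ⟨[], by simp [gList_one], by simp⟩
  | succ n => exact ⟨0 :: gList l (n + 1), gList_succ_succ l n, by simp⟩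

lemma exists_symmetric_run_of_gList_getElem_eq_zero {l n i : ℕ}
    (hi : i < (gList l n).length) (h0 : (gList l n)[i] = 0) :
    ∃ P S, gList l n = P ++ replicate (2 ^ l - 1) 1 ++ 0 :: replicate (2 ^ l - 1) 1 ++ S ∧
      i = P.length + (2 ^ l - 1) ∧ (∀ x ∈ P.getLast?, x ≤ 0) ∧ ∀ x ∈ S.head?, x ≤ 0 := by
  induction n using Nat.twoStepInduction generalizing i with
  | zero => simp [gList] at hi
  | one => simp [gList_one] at h0
  | more n _ ih =>
    have hpos := Nat.one_le_two_pow (n := l)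
    have hg := gList_succ_succ l n
    rw [getElem_of_eq hg] at h0
    rw [hg] at hi
    rcases lt_trichotomy i (2 ^ l - 1) with hlt | rfl | hgt
    · simp [getElem_append_left, hlt] at h0
    · obtain ⟨S, hS, hS0⟩ := exists_gList_eq_replicate_append l n
      exact ⟨[], S, by rw [hg, hS]; simp, by simp, by simp, hS0⟩
    · have hj : i - 2 ^ l < (gList l (n + 1)).length := by simp at hi; omega
      obtain ⟨P, S, hPS, hiP, hP, hS⟩ := ih hj (by
        rw [← h0, getElem_append_right (by simp; omega)]
        simp [show i - (2 ^ l - 1) = i - 2 ^ l + 1 by omega])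
      refine ⟨replicate (2 ^ l - 1) 1 ++ 0 :: P, S, by rw [hg, hPS]; simp, by simp; omega, ?_,
        hS⟩
      cases P using List.reverseRecOn with
      | nil => simp
      | append_singleton P y =>
        rw [← cons_append, ← append_assoc, getLast?_append_of_ne_nil _ (cons_ne_nil _ _)]
        simpa using hP

end Runs

theorem delta_gList_eq_zero_general (l n : ℕ) :
    delta (Finsupp.single (gList l n) 1) = 0 := by
  rw [delta, Finsupp.linearCombination_single, one_smul]
  refine Finset.sum_eq_zero fun i hi => ?_
  replace hi : i < (gList l n).length := Finset.mem_range.1 hi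
  have hle : ∀ x ∈ gList l n, x ≤ 1 := fun x hx => le_one_of_mem_gList hx
  rcases Nat.le_one_iff_eq_zero_or_eq_one.1 (hle _ (List.getElem_mem hi)) with h0 | h1
  · obtain ⟨P, S, hg, rfl, hP, hS⟩ := exists_symmetric_run_of_gList_getElem_eq_zero hi h0
    rw [hg]
    exact deltaTerm_eq_zero_of_symmetric_run P S 0 _ hP hS
  · exact deltaTerm_eq_zero_of_forall_le hi (h1 ▸ hle)

/-- For `ℓ ≥ 0` and `n ≥ 1`, the generator `g_{ℓ,n}` is a cocycle:
`δ(g_{ℓ,n}) = 0` in the mod-2 Fox-Neuwirth complex `FN (n·2^ℓ)`. -/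
theorem delta_gList_eq_zero (l n : ℕ) (hn : 1 ≤ n) :
    delta (Finsupp.single (gList l n) 1) = 0 :=
  delta_gList_eq_zero_general l n

end FoxNeuwirth
end

section
/- Let ℓ ≥ 0 and n, m ≥ 1. In the mod-2 Fox–Neuwirth complexes, the transfer product of the generators satisfies g_{ℓ,n} ⊙ g_{ℓ,m} = C(n+m, n)·g_{ℓ,n+m} in FN_{(n+m)·2^ℓ}, where C(n+m,n) is the binomial coefficient reduced mod 2. -/
namespace FoxNeuwirth

/-- The transfer product on basis tuples: the `0`-block sequence of a tuple is its ordered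
list of maximal runs of strictly positive entries (including empty runs), the runs being
separated by single zero entries; `a ⊙ b` is the sum over all `(r,s)`-shuffles of the
combined block sequences of the tuple reassembling the shuffled blocks with single zero
entries separating consecutive blocks. -/
noncomputable def transferBasis (a b : List ℕ) : V :=
  let Ba := a.splitOnP (fun x => x == 0)
  let Bb := b.splitOnP (fun x => x == 0)
  let C := Ba ++ Bb
  ∑ σ ∈ shuffles Ba.length C.length,
    Finsupp.single
      (List.intercalate [0]
        (List.ofFn fun t : Fin C.length => C.getD ((σ.symm t : Fin C.length) : ℕ) []))
      (1 : ZMod 2)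

/-- The transfer product, extended bilinearly over `F₂`. -/
noncomputable def transfer : V →ₗ[ZMod 2] V →ₗ[ZMod 2] V :=
  Finsupp.linearCombination (ZMod 2) fun a : List ℕ =>
    Finsupp.linearCombination (ZMod 2) fun b : List ℕ => transferBasis a b

/-! Both generators have `0`-block sequences made of identical blocks (runs of `2^ℓ - 1` ones),
so every shuffle reassembles `g_{ℓ,n+m}` and the product is the number of `(n, m)`-shuffles
times `g_{ℓ,n+m}`. A shuffle is determined by the set of positions it gives to the first `n`
blocks, and every `n`-subset of the `n + m` positions arises, so there are `C(n+m, n)` of them. -/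

open Finset Equiv

section Shuffles

variable {k m : ℕ}

lemma mem_shuffles_iff_strictMono {σ : Perm (Fin (k + m))} :
    σ ∈ shuffles k (k + m) ↔
      StrictMono (σ ∘ Fin.castAdd m) ∧ StrictMono (σ ∘ Fin.natAdd k) := by
  simp only [shuffles, mem_filter, mem_univ, true_and]
  constructor
  · rintro ⟨hlow, hhigh⟩
    exact ⟨fun i j hij => hlow _ _ hij (by simp),
      fun i j hij => hhigh _ _ (by simpa using hij) (by simp)⟩
  · rintro ⟨hlow, hhigh⟩
    refine ⟨fun p q hpq hq => ?_, fun p q hpq hp => ?_⟩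
    · exact hlow (a := ⟨p, by omega⟩) (b := ⟨q, hq⟩) hpq
    · have hq : k ≤ (q : ℕ) := by omega
      obtain ⟨i, rfl⟩ : ∃ i : Fin m, Fin.natAdd k i = p :=
        ⟨⟨p - k, by omega⟩, by ext; simp; omega⟩
      obtain ⟨j, rfl⟩ : ∃ j : Fin m, Fin.natAdd k j = q :=
        ⟨⟨q - k, by omega⟩, by ext; simp; omega⟩
      exact hhigh (by simpa using hpq)

/-- `transferBasis` puts block `i` at position `σ i`, so these are the positions of the first
`k` blocks. -/
def lowerPositions (σ : Perm (Fin (k + m))) : Finset (Fin (k + m)) :=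
  univ.image (σ ∘ Fin.castAdd m)

lemma card_lowerPositions (σ : Perm (Fin (k + m))) : #(lowerPositions σ) = k := by
  rw [lowerPositions, card_image_of_injective _ (σ.injective.comp (Fin.castAdd_injective k m)),
    card_univ, Fintype.card_fin]

lemma coe_lowerPositions (σ : Perm (Fin (k + m))) :
    (lowerPositions σ : Set (Fin (k + m))) = Set.range (σ ∘ Fin.castAdd m) := by
  rw [lowerPositions, coe_image, coe_univ, Set.image_univ]

lemma range_comp_natAdd (σ : Perm (Fin (k + m))) :
    Set.range (σ ∘ Fin.natAdd k) = (lowerPositions σ : Set (Fin (k + m)))ᶜ := by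
  rw [coe_lowerPositions]
  ext x
  obtain ⟨p, rfl⟩ := σ.surjective x
  induction p using Fin.addCases with
  | left i => simpa [σ.injective.eq_iff, Fin.ext_iff] using fun j : Fin m => by omega
  | right i => simpa [σ.injective.eq_iff, Fin.ext_iff] using fun j : Fin k => by omega

lemma eq_of_lowerPositions_eq {σ τ : Perm (Fin (k + m))} (hσ : σ ∈ shuffles k (k + m))
    (hτ : τ ∈ shuffles k (k + m)) (h : lowerPositions σ = lowerPositions τ) : σ = τ := by
  rw [mem_shuffles_iff_strictMono] at hσ hτ
  have hlow : σ ∘ Fin.castAdd m = τ ∘ Fin.castAdd m := by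
    rw [← hσ.1.range_inj hτ.1, ← coe_lowerPositions, ← coe_lowerPositions, h]
  have hhigh : σ ∘ Fin.natAdd k = τ ∘ Fin.natAdd k := by
    rw [← hσ.2.range_inj hτ.2, range_comp_natAdd, range_comp_natAdd, h]
  ext p
  induction p using Fin.addCases with
  | left i => exact congrArg Fin.val (congrFun hlow i)
  | right i => exact congrArg Fin.val (congrFun hhigh i)

def shuffleOfLowerPositions (S : Finset (Fin (k + m))) (hS : #S = k) : Perm (Fin (k + m)) :=
  finSumFinEquiv.symm.trans
    (finSumEquivOfFinset hS (by rw [card_compl, hS, Fintype.card_fin]; omega))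

lemma shuffleOfLowerPositions_mem (S : Finset (Fin (k + m))) (hS : #S = k) :
    shuffleOfLowerPositions S hS ∈ shuffles k (k + m) := by
  rw [mem_shuffles_iff_strictMono]
  exact ⟨fun i j hij => by simpa [shuffleOfLowerPositions] using hij,
    fun i j hij => by simpa [shuffleOfLowerPositions] using hij⟩

lemma lowerPositions_shuffleOfLowerPositions (S : Finset (Fin (k + m))) (hS : #S = k) :
    lowerPositions (shuffleOfLowerPositions S hS) = S := by
  simp [lowerPositions, shuffleOfLowerPositions, Function.comp_def]

theorem card_shuffles (k m : ℕ) : #(shuffles k (k + m)) = (k + m).choose k := by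
  have := card_powersetCard k (univ : Finset (Fin (k + m)))
  rw [card_univ, Fintype.card_fin] at this
  rw [← this]
  refine card_bij (fun σ _ => lowerPositions σ)
    (fun σ _ => mem_powersetCard.2 ⟨subset_univ _, card_lowerPositions σ⟩)
    (fun _ hσ _ hτ => eq_of_lowerPositions_eq hσ hτ) (fun S hS => ?_)
  have hS := (mem_powersetCard.1 hS).2
  exact ⟨_, shuffleOfLowerPositions_mem S hS, lowerPositions_shuffleOfLowerPositions S hS⟩

end Shuffles

lemma transfer_single_single (a b : List ℕ) :
    transfer (Finsupp.single a 1) (Finsupp.single b 1) = transferBasis a b := by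
  rw [transfer, Finsupp.linearCombination_single, one_smul, Finsupp.linearCombination_single,
    one_smul]

lemma transferBasis_of_splitOnP_eq_replicate {a b B : List ℕ} {n m : ℕ}
    (ha : a.splitOnP (· == 0) = List.replicate n B)
    (hb : b.splitOnP (· == 0) = List.replicate m B) :
    transferBasis a b = #(shuffles n (n + m)) •
      Finsupp.single (List.intercalate [0] (List.replicate (n + m) B)) 1 := by
  unfold transferBasis
  dsimp only
  rw [ha, hb, List.replicate_append_replicate]
  simp only [List.getD_eq_getElem _ _ (Fin.is_lt _), List.getElem_replicate, List.ofFn_const,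
    sum_const]
  rw [List.length_replicate, List.length_replicate]

lemma splitOnP_gList (l : ℕ) {n : ℕ} (hn : 1 ≤ n) :
    (gList l n).splitOnP (· == 0) = List.replicate n (List.replicate (2 ^ l - 1) 1) := by
  have h : (gList l n).splitOn 0 = List.replicate n (List.replicate (2 ^ l - 1) 1) :=
    List.splitOn_intercalate 0
      (fun L hL => by simp [List.eq_of_mem_replicate hL, List.mem_replicate]) (by simp; omega)
  simpa [List.splitOn] using h

/-- For `ℓ ≥ 0` and `n, m ≥ 1`, the transfer product of the generators
satisfies `g_{ℓ,n} ⊙ g_{ℓ,m} = C(n+m, n) · g_{ℓ,n+m}` in `FN ((n+m)·2^ℓ)`, where the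
binomial coefficient is reduced mod 2. -/
theorem transfer_gList (l n m : ℕ) (hn : 1 ≤ n) (hm : 1 ≤ m) :
    transfer (Finsupp.single (gList l n) 1) (Finsupp.single (gList l m) 1)
      = ((n + m).choose n : ZMod 2) • Finsupp.single (gList l (n + m)) 1 := by
  rw [transfer_single_single,
    transferBasis_of_splitOnP_eq_replicate (splitOnP_gList l hn) (splitOnP_gList l hm),
    card_shuffles, Nat.cast_smul_eq_nsmul, gList]

end FoxNeuwirth
end
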